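/- arXiv:2604.21834 — 11 statements merged into one kernel-verified Lean document; each statement's English description precedes it below -/
import Mathlib

section
/- Let p ≥ 3 and n ≥ p + 1 be integers. Every rainbow cancellative edge-coloring of K_n^(p) that uses exactly 1 + ⌊n/p⌋ colors contains a vertex subset U with |U| = p·⌊n/p⌋ such that U contains ⌊n/p⌋ pairwise disjoint edges whose colors are pairwise distinct, and every other p-element subset of U receives the one remaining color (a single common color distinct from the colors of those ⌊n/p⌋ edges). -/
/-- The number of colors used by the edge-coloring `col` on the `p`-element
subsets (edges) of the vertex set `Fin n`. -/
def numColors (n p : ℕ) (col : Finset (Fin n) → ℕ) : ℕ :=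
  (((Finset.univ : Finset (Finset (Fin n))).filter (fun e => e.card = p)).image col).card

/-- An edge-coloring of `K_n^(p)` is rainbow cancellative if there are no three
edges `A, B, C` with pairwise distinct colors such that `A △ B ⊆ C`. -/
def RainbowCancellative (n p : ℕ) (col : Finset (Fin n) → ℕ) : Prop :=
  ∀ A B C : Finset (Fin n), A.card = p → B.card = p → C.card = p →
    col A ≠ col B → col A ≠ col C → col B ≠ col C →
    ¬ ((A \ B) ∪ (B \ A) ⊆ C)

namespace RCAux

open Finset

variable {n p : ℕ} {col : Finset (Fin n) → ℕ}

lemma tool1 (hc : RainbowCancellative n p col) {A B C : Finset (Fin n)}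
    (hA : A.card = p) (hB : B.card = p) (hC : C.card = p)
    (hAB : col A ≠ col B) (hsub : (A \ B) ∪ (B \ A) ⊆ C) :
    col C = col A ∨ col C = col B := by
  by_contra h
  push_neg at h
  exact hc A B C hA hB hC hAB (Ne.symm h.1) (Ne.symm h.2) hsub

lemma tool1' (hc : RainbowCancellative n p col) {A B : Finset (Fin n)} {qa qb : Fin n}
    (hA : A.card = p) (hB : B.card = p) (hAB : col A ≠ col B)
    (hd1 : A \ B = {qa}) (hd2 : B \ A = {qb})
    {C : Finset (Fin n)} (hC : C.card = p) (h1 : qa ∈ C) (h2 : qb ∈ C) :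
    col C = col A ∨ col C = col B := by
  refine tool1 hc hA hB hC hAB ?_
  rw [hd1, hd2]
  intro x hx
  simp only [mem_union, mem_singleton] at hx
  rcases hx with rfl | rfl <;> assumption

lemma swap_card {A : Finset (Fin n)} {q e : Fin n} (hq : q ∈ A) (he : e ∉ A) :
    (insert e (A.erase q)).card = A.card := by
  rw [card_insert_of_notMem (fun h => he (mem_of_mem_erase h)), card_erase_of_mem hq]
  have : 1 ≤ A.card := card_pos.mpr ⟨q, hq⟩
  omega

lemma swap_sdiff₁ {A : Finset (Fin n)} {q e : Fin n} (hq : q ∈ A) (he : e ∉ A) :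
    A \ insert e (A.erase q) = {q} := by
  ext x
  simp only [mem_sdiff, mem_insert, mem_erase, mem_singleton]
  constructor
  · rintro ⟨hxA, hx⟩
    by_contra hxq
    exact hx (Or.inr ⟨hxq, hxA⟩)
  · rintro rfl
    refine ⟨hq, ?_⟩
    rintro (rfl | ⟨hne, _⟩)
    · exact he hq
    · exact hne rfl

lemma swap_sdiff₂ {A : Finset (Fin n)} {q e : Fin n} (hq : q ∈ A) (he : e ∉ A) :
    insert e (A.erase q) \ A = {e} := by
  ext x
  simp only [mem_sdiff, mem_insert, mem_erase, mem_singleton]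
  constructor
  · rintro ⟨hx, hxA⟩
    rcases hx with rfl | ⟨_, hx2⟩
    · rfl
    · exact absurd hx2 hxA
  · rintro rfl
    exact ⟨Or.inl rfl, he⟩

/-- Lemma A (genuine flip pair star lemma), asymmetric auxiliary version. -/
lemma auxA (hc : RainbowCancellative n p col) (hp : 3 ≤ p)
    {s t : Fin n} {x y : ℕ} (hxy : x ≠ y)
    (hi : ∀ E : Finset (Fin n), E.card = p → s ∈ E → t ∈ E → col E = x ∨ col E = y)
    {P H : Finset (Fin n)} (hPcard : P.card = p) (hHcard : H.card = p)
    (hPs : s ∈ P) (hPt : t ∈ P) (hHs : s ∈ H) (hHt : t ∈ H)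
    (hPcol : col P = x) (hHcol : col H = y)
    {F : Finset (Fin n)} (hF : F.card = p) (hsF : s ∈ F) (htF : t ∉ F)
    (hz1 : col F ≠ x) (hz2 : col F ≠ y) : False := by
  have hst : s ≠ t := fun h => htF (h ▸ hsF)
  have hFs_card : (F.erase s).card = p - 1 := by rw [card_erase_of_mem hsF, hF]
  have hFs_ne : (F.erase s).Nonempty := by
    rw [← card_pos, hFs_card]; omega
  -- facts about G w := insert t (F.erase w)
  have hwF : ∀ w ∈ F.erase s, w ∈ F := fun w hw => mem_of_mem_erase hw
  have hws : ∀ w ∈ F.erase s, w ≠ s := fun w hw => (mem_erase.mp hw).1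
  have hwt : ∀ w ∈ F.erase s, w ≠ t := fun w hw => fun h => htF (h ▸ hwF w hw)
  have hGcard : ∀ w ∈ F.erase s, (insert t (F.erase w)).card = p := by
    intro w hw; rw [swap_card (hwF w hw) htF, hF]
  have hGs : ∀ w ∈ F.erase s, s ∈ insert t (F.erase w) :=
    fun w hw => mem_insert_of_mem (mem_erase.mpr ⟨(hws w hw).symm, hsF⟩)
  have hGt : ∀ w : Fin n, t ∈ insert t (F.erase w) := fun w => mem_insert_self _ _
  have hGcol : ∀ w ∈ F.erase s, col (insert t (F.erase w)) = x ∨ col (insert t (F.erase w)) = y :=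
    fun w hw => hi _ (hGcard w hw) (hGs w hw) (hGt w)
  have hFG : ∀ w ∈ F.erase s, F \ insert t (F.erase w) = {w} :=
    fun w hw => swap_sdiff₁ (hwF w hw) htF
  have hGF : ∀ w ∈ F.erase s, insert t (F.erase w) \ F = {t} :=
    fun w hw => swap_sdiff₂ (hwF w hw) htF
  by_cases hcase : ∀ w ∈ F.erase s, ∀ w' ∈ F.erase s, col (insert t (F.erase w)) = col (insert t (F.erase w'))
  case neg =>
    push_neg at hcase
    obtain ⟨w, hw, w', hw', hne⟩ := hcase
    have hdiff : (insert t (F.erase w) \ insert t (F.erase w')) ∪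
        (insert t (F.erase w') \ insert t (F.erase w)) ⊆ F := by
      intro a ha
      simp only [mem_union, mem_sdiff, mem_insert, mem_erase] at ha
      rcases ha with ⟨h1, _⟩ | ⟨h1, _⟩ <;>
      · rcases h1 with rfl | ⟨_, h⟩
        · exact absurd (Or.inl rfl) (by tauto)
        · exact h
    have hcF1 : col (insert t (F.erase w)) ≠ col F := by
      rcases hGcol w hw with h | h <;> rw [h] <;> exact fun hh => by simp_all
    have hcF2 : col (insert t (F.erase w')) ≠ col F := by
      rcases hGcol w' hw' with h | h <;> rw [h] <;> exact fun hh => by simp_all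
    exact hc _ _ _ (hGcard w hw) (hGcard w' hw') hF hne hcF1 hcF2 hdiff
  case pos =>
    obtain ⟨w₀, hw₀⟩ := hFs_ne
    set κ := col (insert t (F.erase w₀)) with hκdef
    have hκ : κ = x ∨ κ = y := hGcol w₀ hw₀
    have hconst : ∀ w ∈ F.erase s, col (insert t (F.erase w)) = κ :=
      fun w hw => hcase w hw w₀ hw₀
    have hκF : col F ≠ κ := by rcases hκ with h | h <;> rw [h] <;> assumption
    obtain ⟨L, hLcard, hLs, hLt, hLκ, hLxy⟩ :
        ∃ L : Finset (Fin n), L.card = p ∧ s ∈ L ∧ t ∈ L ∧ col L ≠ κ ∧ (col L = x ∨ col L = y) := by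
      rcases hκ with h | h
      · exact ⟨H, hHcard, hHs, hHt, by rw [hHcol, h]; exact hxy.symm, Or.inr hHcol⟩
      · exact ⟨P, hPcard, hPs, hPt, by rw [hPcol, h]; exact hxy, Or.inl hPcol⟩
    -- bipalette on {w, t}
    have hbip : ∀ w ∈ F.erase s, ∀ E : Finset (Fin n), E.card = p → w ∈ E → t ∈ E →
        col E = col F ∨ col E = κ := by
      intro w hw E hE hwE htE
      have := tool1' hc hF (hGcard w hw) (by rw [hconst w hw]; exact hκF)
        (hFG w hw) (hGF w hw) hE hwE htE
      rwa [hconst w hw] at this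
    have hLF : ∀ w ∈ F.erase s, w ∉ L := by
      intro w hw hwL
      rcases hbip w hw L hLcard hwL hLt with h | h
      · rcases hLxy with h' | h' <;> rw [h'] at h <;> [exact hz1 h.symm; exact hz2 h.symm]
      · exact hLκ h
    set w := w₀ with hwdef
    have hw : w ∈ F.erase s := hw₀
    have hwnL : w ∉ L := hLF w hw
    obtain ⟨h₁, hh₁⟩ : ∃ h₁, h₁ ∈ (L.erase s).erase t := by
      have : ((L.erase s).erase t).card ≥ p - 2 := by
        have c1 : (L.erase s).card = p - 1 := by rw [card_erase_of_mem hLs, hLcard]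
        have := card_erase_le (s := L.erase s) (a := t)
        have := card_erase_of_mem (show t ∈ L.erase s from mem_erase.mpr ⟨hst.symm, hLt⟩)
        omega
      have : ((L.erase s).erase t).Nonempty := by rw [← card_pos]; omega
      exact this
    have hh₁t : h₁ ≠ t := (mem_erase.mp hh₁).1
    have hh₁s : h₁ ≠ s := (mem_erase.mp (mem_of_mem_erase hh₁)).1
    have hh₁L : h₁ ∈ L := mem_of_mem_erase (mem_of_mem_erase hh₁)
    have hwh₁ : w ≠ h₁ := fun h => hwnL (h ▸ hh₁L)
    -- C := insert w (L.erase h₁)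
    have hCcard : (insert w (L.erase h₁)).card = p := by rw [swap_card hh₁L hwnL, hLcard]
    have hCs : s ∈ insert w (L.erase h₁) := mem_insert_of_mem (mem_erase.mpr ⟨hh₁s.symm, hLs⟩)
    have hCt : t ∈ insert w (L.erase h₁) := mem_insert_of_mem (mem_erase.mpr ⟨hh₁t.symm, hLt⟩)
    have hCw : w ∈ insert w (L.erase h₁) := mem_insert_self _ _
    have hCκ : col (insert w (L.erase h₁)) = κ := by
      rcases hbip w hw _ hCcard hCw hCt with h | h
      · exfalso
        rcases hi _ hCcard hCs hCt with h' | h'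
        · exact hz1 (by rw [← h, h'])
        · exact hz2 (by rw [← h, h'])
      · exact h
    have hCL : insert w (L.erase h₁) \ L = {w} := swap_sdiff₂ hh₁L hwnL
    have hLC : L \ insert w (L.erase h₁) = {h₁} := swap_sdiff₁ hh₁L hwnL
    have hbip2 : ∀ E : Finset (Fin n), E.card = p → w ∈ E → h₁ ∈ E →
        col E = κ ∨ col E = col L := by
      intro E hE h1 h2
      have := tool1' hc hCcard hLcard (by rw [hCκ]; exact fun h => hLκ h.symm) hCL hLC hE h1 h2
      rwa [hCκ] at this
    -- K := insert w (L.erase s)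
    have hKcard : (insert w (L.erase s)).card = p := by rw [swap_card hLs hwnL, hLcard]
    have hKt : t ∈ insert w (L.erase s) := mem_insert_of_mem (mem_erase.mpr ⟨hst.symm, hLt⟩)
    have hKh₁ : h₁ ∈ insert w (L.erase s) := mem_insert_of_mem (mem_erase.mpr ⟨hh₁s, hh₁L⟩)
    have hKw : w ∈ insert w (L.erase s) := mem_insert_self _ _
    have hKκ : col (insert w (L.erase s)) = κ := by
      rcases hbip w hw _ hKcard hKw hKt with h | h
      · exfalso
        rcases hbip2 _ hKcard hKw hKh₁ with h' | h'
        · exact hκF (by rw [← h, h'])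
        · rcases hLxy with h'' | h'' <;> rw [h''] at h' <;>
            [exact hz1 (by rw [← h, h']); exact hz2 (by rw [← h, h'])]
      · exact h
    have hKL : insert w (L.erase s) \ L = {w} := swap_sdiff₂ hLs hwnL
    have hLK : L \ insert w (L.erase s) = {s} := swap_sdiff₁ hLs hwnL
    have final := tool1' hc hKcard hLcard (by rw [hKκ]; exact fun h => hLκ h.symm) hKL hLK
      hF (hwF w hw) hsF
    rcases final with h | h
    · rw [hKκ] at h; exact hκF h
    · rcases hLxy with h' | h' <;> rw [h'] at h <;> [exact hz1 h; exact hz2 h]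

/-- Lemma A: every edge meeting a genuine flip pair is palette-colored. -/
lemma lemA (hc : RainbowCancellative n p col) (hp : 3 ≤ p)
    {s t : Fin n} {x y : ℕ} (hxy : x ≠ y)
    (hi : ∀ E : Finset (Fin n), E.card = p → s ∈ E → t ∈ E → col E = x ∨ col E = y)
    {P H : Finset (Fin n)} (hPcard : P.card = p) (hHcard : H.card = p)
    (hPs : s ∈ P) (hPt : t ∈ P) (hHs : s ∈ H) (hHt : t ∈ H)
    (hPcol : col P = x) (hHcol : col H = y)
    {F : Finset (Fin n)} (hF : F.card = p) (hvF : s ∈ F ∨ t ∈ F) :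
    col F = x ∨ col F = y := by
  by_contra h
  push_neg at h
  by_cases hsF : s ∈ F <;> by_cases htF : t ∈ F
  · rcases hi F hF hsF htF with h' | h'
    · exact h.1 h'
    · exact h.2 h'
  · exact auxA hc hp hxy hi hPcard hHcard hPs hPt hHs hHt hPcol hHcol hF hsF htF h.1 h.2
  · exact auxA hc hp hxy (fun E hE h1 h2 => hi E hE h2 h1) hPcard hHcard hPt hPs hHt hHs
      hPcol hHcol hF htF hsF h.1 h.2
  · rcases hvF with h' | h' <;> contradiction

/-- Sublemma S: analysis of an adjacent pair of distinctly-colored edges through `v`,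
given an outsider edge `R` through `v` of a third color. -/
lemma lemS (hc : RainbowCancellative n p col) (hp : 3 ≤ p)
    {P P' R : Finset (Fin n)} {v g g' : Fin n}
    (hP : P.card = p) (hP' : P'.card = p) (hR : R.card = p)
    (hd1 : P \ P' = {g}) (hd2 : P' \ P = {g'})
    (hvP : v ∈ P) (hvP' : v ∈ P') (hvR : v ∈ R)
    (hcol : col P ≠ col P') (hz1 : col R ≠ col P) (hz2 : col R ≠ col P') :
    ∃ (G : Fin n) (μ μ' : ℕ),
      ((μ = col P ∧ μ' = col P') ∨ (μ = col P' ∧ μ' = col P)) ∧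
      G ∈ P ∪ P' ∧ G ≠ v ∧ G ∉ R ∧
      (∀ E : Finset (Fin n), E.card = p → v ∈ E → G ∈ E → col E = μ) ∧
      (∀ r ∈ P ∪ P', r ≠ G → col ((P ∪ P').erase r) = μ) ∧
      col ((P ∪ P').erase G) = μ' := by
  have hgP : g ∈ P := (mem_sdiff.mp (hd1 ▸ mem_singleton_self g)).1
  have hgP' : g ∉ P' := (mem_sdiff.mp (hd1 ▸ mem_singleton_self g)).2
  have hg'P' : g' ∈ P' := (mem_sdiff.mp (hd2 ▸ mem_singleton_self g')).1
  have hg'P : g' ∉ P := (mem_sdiff.mp (hd2 ▸ mem_singleton_self g')).2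
  have hvg : v ≠ g := fun h => hgP' (h ▸ hvP')
  have hvg' : v ≠ g' := fun h => hg'P (h ▸ hvP)
  have hW1 : P ∪ P' = insert g' P := by
    ext a
    simp only [mem_union, mem_insert]
    constructor
    · rintro (h | h)
      · exact Or.inr h
      · by_cases h2 : a ∈ P
        · exact Or.inr h2
        · left
          have h3 : a ∈ P' \ P := mem_sdiff.mpr ⟨h, h2⟩
          rwa [hd2, mem_singleton] at h3
    · rintro (rfl | h)
      · exact Or.inr hg'P'
      · exact Or.inl h
  have hW2 : P ∪ P' = insert g P' := by
    ext a
    simp only [mem_union, mem_insert]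
    constructor
    · rintro (h | h)
      · by_cases h2 : a ∈ P'
        · exact Or.inr h2
        · left
          have h3 : a ∈ P \ P' := mem_sdiff.mpr ⟨h, h2⟩
          rwa [hd1, mem_singleton] at h3
      · exact Or.inr h
    · rintro (rfl | h)
      · exact Or.inl hgP
      · exact Or.inr h
  have hWcard : (P ∪ P').card = p + 1 := by
    rw [hW1, card_insert_of_notMem hg'P, hP]
  have hWg' : (P ∪ P').erase g' = P := by rw [hW1, erase_insert hg'P]
  have hWg : (P ∪ P').erase g = P' := by rw [hW2, erase_insert hgP']
  have herasecard : ∀ r ∈ P ∪ P', ((P ∪ P').erase r).card = p := by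
    intro r hr
    rw [card_erase_of_mem hr, hWcard]
    omega
  have hdiffs : ∀ r ∈ P ∪ P', ∀ r' ∈ P ∪ P', r ≠ r' →
      ((P ∪ P').erase r) \ ((P ∪ P').erase r') = {r'} := by
    intro r hr r' hr' hne
    ext a
    simp only [mem_sdiff, mem_erase, mem_singleton]
    constructor
    · rintro ⟨⟨har, haW⟩, h2⟩
      by_contra hane
      exact h2 ⟨hane, haW⟩
    · rintro rfl
      exact ⟨⟨Ne.symm hne, hr'⟩, fun h => h.1 rfl⟩
  have hvW : v ∈ P ∪ P' := mem_union_left _ hvP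
  have hbipW : ∀ r ∈ P ∪ P', ∀ r' ∈ P ∪ P', r ≠ r' →
      col ((P ∪ P').erase r) ≠ col ((P ∪ P').erase r') →
      ∀ E : Finset (Fin n), E.card = p → r' ∈ E → r ∈ E →
      col E = col ((P ∪ P').erase r) ∨ col E = col ((P ∪ P').erase r') := by
    intro r hr r' hr' hne hcne E hE h1 h2
    exact tool1' hc (herasecard r hr) (herasecard r' hr') hcne
      (hdiffs r hr r' hr' hne) (hdiffs r' hr' r hr (Ne.symm hne)) hE h1 h2
  have hcolW : ∀ r ∈ P ∩ P', col ((P ∪ P').erase r) = col P ∨ col ((P ∪ P').erase r) = col P' := by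
    intro r hr
    have hrP := mem_inter.mp hr
    refine tool1' hc hP hP' hcol hd1 hd2
      (herasecard r (mem_union_left _ hrP.1)) ?_ ?_
    · exact mem_erase.mpr ⟨fun h => hgP' (h ▸ hrP.2), mem_union_left _ hgP⟩
    · exact mem_erase.mpr ⟨fun h => hg'P (h ▸ hrP.1), mem_union_right _ hg'P'⟩
  have hvD : v ∈ P ∩ P' := mem_inter.mpr ⟨hvP, hvP'⟩
  have hDcard : (P ∩ P').card = p - 1 := by
    have h := card_sdiff_add_card_inter P P'
    rw [hd1, card_singleton, hP] at h
    omega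
  have hcg' : col ((P ∪ P').erase g') = col P := by rw [hWg']
  have hcg : col ((P ∪ P').erase g) = col P' := by rw [hWg]
  by_cases hcase : ∃ c ∈ P ∩ P', c ≠ v ∧ col ((P ∪ P').erase c) ≠ col ((P ∪ P').erase v)
  · exfalso
    obtain ⟨c, hcD, hcv, hcne⟩ := hcase
    have hcP := (mem_inter.mp hcD).1
    have hcP' := (mem_inter.mp hcD).2
    have hcW : c ∈ P ∪ P' := mem_union_left _ hcP
    have hi : ∀ E : Finset (Fin n), E.card = p → v ∈ E → c ∈ E →
        col E = col P ∨ col E = col P' := by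
      intro E hE h1 h2
      rcases hbipW v hvW c hcW (Ne.symm hcv) (Ne.symm hcne) E hE h2 h1 with h | h
      · rw [h]; exact hcolW v hvD
      · rw [h]; exact hcolW c hcD
    rcases lemA hc hp hcol hi hP hP' hvP hcP hvP' hcP' rfl rfl hR (Or.inl hvR) with h | h
    · exact hz1 h
    · exact hz2 h
  · push_neg at hcase
    have hconst : ∀ c ∈ P ∩ P', col ((P ∪ P').erase c) = col ((P ∪ P').erase v) := by
      intro c hc'
      by_cases h : c = v
      · rw [h]
      · exact hcase c hc' h
    have hμ : col ((P ∪ P').erase v) = col P ∨ col ((P ∪ P').erase v) = col P' := hcolW v hvD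
    have hWsplit : ∀ r ∈ P ∪ P', r ∈ P ∩ P' ∨ r = g ∨ r = g' := by
      intro r hr
      rcases mem_union.mp hr with h | h
      · by_cases h2 : r ∈ P'
        · exact Or.inl (mem_inter.mpr ⟨h, h2⟩)
        · refine Or.inr (Or.inl ?_)
          have : r ∈ P \ P' := mem_sdiff.mpr ⟨h, h2⟩
          rwa [hd1, mem_singleton] at this
      · by_cases h2 : r ∈ P
        · exact Or.inl (mem_inter.mpr ⟨h2, h⟩)
        · refine Or.inr (Or.inr ?_)
          have : r ∈ P' \ P := mem_sdiff.mpr ⟨h, h2⟩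
          rwa [hd2, mem_singleton] at this
    obtain ⟨G, μ', hGW, hGv, hpal, hμμ', hallW, hminor⟩ :
        ∃ (G : Fin n) (μ' : ℕ), G ∈ P ∪ P' ∧ G ≠ v ∧
          ((col ((P ∪ P').erase v) = col P ∧ μ' = col P') ∨
            (col ((P ∪ P').erase v) = col P' ∧ μ' = col P)) ∧
          col ((P ∪ P').erase v) ≠ μ' ∧
          (∀ r ∈ P ∪ P', r ≠ G → col ((P ∪ P').erase r) = col ((P ∪ P').erase v)) ∧
          col ((P ∪ P').erase G) = μ' := by
      rcases hμ with h | h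
      · refine ⟨g, col P', mem_union_left _ hgP, Ne.symm hvg, Or.inl ⟨h, rfl⟩,
          by rw [h]; exact hcol, ?_, hcg⟩
        intro r hr hrg
        rcases hWsplit r hr with h' | h' | h'
        · exact hconst r h'
        · exact absurd h' hrg
        · rw [h', hcg', h]
      · refine ⟨g', col P, mem_union_right _ hg'P', Ne.symm hvg', Or.inr ⟨h, rfl⟩,
          by rw [h]; exact Ne.symm hcol, ?_, hcg'⟩
        intro r hr hrg
        rcases hWsplit r hr with h' | h' | h'
        · exact hconst r h'
        · rw [h', hcg, h]
        · exact absurd h' hrg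
    set μ := col ((P ∪ P').erase v) with hμdef
    have hbipG : ∀ r ∈ P ∪ P', r ≠ G → ∀ E : Finset (Fin n), E.card = p → r ∈ E → G ∈ E →
        col E = μ ∨ col E = μ' := by
      intro r hr hrG E hE h1 h2
      have h3 := hbipW r hr G hGW hrG (by rw [hallW r hr hrG, hminor]; exact hμμ') E hE h2 h1
      rw [hallW r hr hrG, hminor] at h3
      exact h3
    have hGR : G ∉ R := by
      intro hGRmem
      rcases hbipG v hvW (Ne.symm hGv) R hR hvR hGRmem with h | h
      · rcases hpal with ⟨h1, _⟩ | ⟨h1, _⟩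
        · exact hz1 (by rw [h]; exact h1)
        · exact hz2 (by rw [h]; exact h1)
      · rcases hpal with ⟨_, h2⟩ | ⟨_, h2⟩
        · exact hz2 (by rw [h, h2])
        · exact hz1 (by rw [h, h2])
    have hmono : ∀ E : Finset (Fin n), E.card = p → v ∈ E → G ∈ E → col E = μ := by
      intro E hE h1 h2
      rcases hbipG v hvW (Ne.symm hGv) E hE h1 h2 with h | h
      · exact h
      · exfalso
        obtain ⟨r₀, hr₀⟩ : ∃ r₀, r₀ ∈ (P ∩ P').erase v := by
          have hcard : ((P ∩ P').erase v).card = p - 2 := by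
            rw [card_erase_of_mem hvD, hDcard]
            omega
          have : ((P ∩ P').erase v).Nonempty := by rw [← card_pos, hcard]; omega
          exact this
        have hr₀v : r₀ ≠ v := (mem_erase.mp hr₀).1
        have hr₀D : r₀ ∈ P ∩ P' := mem_of_mem_erase hr₀
        have hr₀W : r₀ ∈ P ∪ P' := mem_union_left _ (mem_inter.mp hr₀D).1
        have hr₀G : r₀ ≠ G := by
          intro hh
          apply hμμ'
          rw [← hminor, ← hh, hconst r₀ hr₀D]
        have hvr₀ : v ∈ (P ∪ P').erase r₀ := mem_erase.mpr ⟨Ne.symm hr₀v, hvW⟩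
        have hGr₀ : G ∈ (P ∪ P').erase r₀ := mem_erase.mpr ⟨Ne.symm hr₀G, hGW⟩
        have hwit1col : col ((P ∪ P').erase r₀) = μ := hallW r₀ hr₀W hr₀G
        rcases lemA hc hp hμμ' (hbipG v hvW (Ne.symm hGv))
          (herasecard r₀ hr₀W) hE hvr₀ hGr₀ h1 h2 hwit1col h hR (Or.inl hvR) with hco | hco
        · rcases hpal with ⟨hq, _⟩ | ⟨hq, _⟩
          · exact hz1 (by rw [hco]; exact hq)
          · exact hz2 (by rw [hco]; exact hq)
        · rcases hpal with ⟨_, hq⟩ | ⟨_, hq⟩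
          · exact hz2 (by rw [hco, hq])
          · exact hz1 (by rw [hco, hq])
    exact ⟨G, μ, μ', by
        rcases hpal with ⟨h1, h2⟩ | ⟨h1, h2⟩
        · exact Or.inl ⟨h1, h2⟩
        · exact Or.inr ⟨h1, h2⟩,
      hGW, hGv, hGR, hmono, hallW, hminor⟩

/-- The N-trick: two monochromatic pair-stars through `v` with different colors clash. -/
lemma ntrick (hp : 3 ≤ p) (hpn : p ≤ n) {v a b : Fin n} {μ ν : ℕ} (hμν : μ ≠ ν)
    (m1 : ∀ E : Finset (Fin n), E.card = p → v ∈ E → a ∈ E → col E = μ)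
    (m2 : ∀ E : Finset (Fin n), E.card = p → v ∈ E → b ∈ E → col E = ν) : False := by
  have h3 : ({v, a, b} : Finset (Fin n)).card ≤ p := by
    refine le_trans ?_ hp
    apply (card_insert_le _ _).trans
    apply Nat.succ_le_succ
    apply (card_insert_le _ _).trans
    simp
  obtain ⟨N, hsub, hcard⟩ := exists_superset_card_eq h3 (by rw [Fintype.card_fin]; exact hpn)
  have hv : v ∈ N := hsub (by simp)
  have ha : a ∈ N := hsub (by simp)
  have hb : b ∈ N := hsub (by simp)
  exact hμν (by rw [← m1 N hcard hv ha, m2 N hcard hv hb])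

/-- Phase 3: finishing off a terminal configuration. -/
lemma lemP3 (hc : RainbowCancellative n p col) (hp : 3 ≤ p) (hpn : p ≤ n)
    {v G₁ : Fin n} {μ₁ ν₁ ζ : ℕ} (hμν : μ₁ ≠ ν₁) (hζ1 : ζ ≠ μ₁) (hζ2 : ζ ≠ ν₁)
    (mono₁ : ∀ E : Finset (Fin n), E.card = p → v ∈ E → G₁ ∈ E → col E = μ₁)
    {K : Finset (Fin n)} (hK : K.card = p) (hvK : v ∈ K) (hKcol : col K = μ₁)
    {Q : Finset (Fin n)} (hQ : Q.card = p) (hvQ : v ∈ Q) (hQcol : col Q = ζ) :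
    ∀ M : Finset (Fin n), M.card = p → v ∈ M → col M = ν₁ → False := by
  suffices h : ∀ k, ∀ M : Finset (Fin n), (M \ Q).card = k → M.card = p → v ∈ M →
      col M = ν₁ → False by
    intro M hM hvM hMcol
    exact h _ M rfl hM hvM hMcol
  intro k
  induction k using Nat.strong_induction_on with
  | _ k IH =>
  intro M hMQk hM hvM hMcol
  have hMne : M ≠ Q := by
    intro h
    apply hζ2
    rw [← hQcol, ← h]
    exact hMcol
  have hMQpos : (M \ Q).Nonempty := by
    rw [nonempty_iff_ne_empty]
    intro h
    exact hMne (eq_of_subset_of_card_le (sdiff_eq_empty_iff_subset.mp h)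
      (le_of_eq (hQ.trans hM.symm)))
  have hQM : (Q \ M).card = (M \ Q).card := by
    have h1 := card_sdiff_add_card_inter M Q
    have h2 := card_sdiff_add_card_inter Q M
    rw [inter_comm] at h2
    rw [hM] at h1
    rw [hQ] at h2
    omega
  by_cases hk1 : (M \ Q).card = 1
  · obtain ⟨q, hq⟩ := card_eq_one.mp hk1
    obtain ⟨e, he⟩ := card_eq_one.mp (by rw [hQM, hk1] : (Q \ M).card = 1)
    have hcolMQ : col M ≠ col Q := by
      rw [hMcol, hQcol]; exact fun h => hζ2 h.symm
    obtain ⟨G₂, μ₂, μ₂', hpal, _, _, _, hmono₂, _, _⟩ :=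
      lemS hc hp hM hQ hK hq he hvM hvQ hvK hcolMQ
        (by rw [hKcol, hMcol]; exact hμν) (by rw [hKcol, hQcol]; exact fun h => hζ1 h.symm)
    have hμ₂ : μ₁ ≠ μ₂ := by
      rcases hpal with ⟨h1, _⟩ | ⟨h1, _⟩
      · rw [h1, hMcol]; exact hμν
      · rw [h1, hQcol]; exact fun h => hζ1 h.symm
    exact ntrick hp hpn hμ₂ mono₁ hmono₂
  · obtain ⟨q, hqmem⟩ := hMQpos
    have hq2 := mem_sdiff.mp hqmem
    obtain ⟨e, hemem⟩ : (Q \ M).Nonempty := by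
      rw [← card_pos, hQM]
      exact card_pos.mpr ⟨q, hqmem⟩
    have he2 := mem_sdiff.mp hemem
    have hqv : q ≠ v := fun h => hq2.2 (h ▸ hvQ)
    have hCcard : (insert e (M.erase q)).card = p := by rw [swap_card hq2.1 he2.2, hM]
    have hvC : v ∈ insert e (M.erase q) :=
      mem_insert_of_mem (mem_erase.mpr ⟨Ne.symm hqv, hvM⟩)
    have hMC : M \ insert e (M.erase q) = {q} := swap_sdiff₁ hq2.1 he2.2
    have hCM : insert e (M.erase q) \ M = {e} := swap_sdiff₂ hq2.1 he2.2
    have hCQ : insert e (M.erase q) \ Q = (M \ Q).erase q := by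
      ext a
      simp only [mem_sdiff, mem_insert, mem_erase]
      constructor
      · rintro ⟨rfl | ⟨haq, haM⟩, haQ⟩
        · exact absurd he2.1 haQ
        · exact ⟨haq, haM, haQ⟩
      · rintro ⟨haq, haM, haQ⟩
        exact ⟨Or.inr ⟨haq, haM⟩, haQ⟩
    have hCQcard : (insert e (M.erase q) \ Q).card = k - 1 := by
      rw [hCQ, card_erase_of_mem hqmem, hMQk]
    have hkpos : 1 ≤ k := by
      rw [← hMQk]
      exact card_pos.mpr ⟨q, hqmem⟩
    have hklt : k - 1 < k := by omega
    by_cases hγ1 : col (insert e (M.erase q)) = ν₁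
    · exact IH (k - 1) hklt _ hCQcard hCcard hvC hγ1
    by_cases hγ2 : col (insert e (M.erase q)) = μ₁
    · obtain ⟨G', μ', μ'', hpal, hGW, hGv, hGQ, hmono', hallW, hminor⟩ :=
        lemS hc hp hM hCcard hQ hMC hCM hvM hvC hvQ
          (by rw [hMcol, hγ2]; exact Ne.symm hμν)
          (by rw [hQcol, hMcol]; exact hζ2)
          (by rw [hQcol, hγ2]; exact hζ1)
      rcases hpal with ⟨h1, h2⟩ | ⟨h1, h2⟩
      · exact ntrick hp hpn (show μ₁ ≠ μ' by rw [h1, hMcol]; exact hμν) mono₁ hmono'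
      · have hGe : G' ≠ e := fun h => hGQ (h ▸ he2.1)
        have hGM : G' ∈ M := by
          rcases mem_union.mp hGW with h | h
          · exact h
          · rcases mem_insert.mp h with h' | h'
            · exact absurd h' hGe
            · exact mem_of_mem_erase h'
        have hGMQ : G' ∈ M \ Q := mem_sdiff.mpr ⟨hGM, hGQ⟩
        have hMunion : M ∪ insert e (M.erase q) = insert e M := by
          ext a
          simp only [mem_union, mem_insert, mem_erase]
          constructor
          · rintro (h | rfl | ⟨_, h⟩)
            · exact Or.inr h
            · exact Or.inl rfl
            · exact Or.inr h
          · rintro (rfl | h)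
            · exact Or.inr (Or.inl rfl)
            · exact Or.inl h
        have hM'card : ((M ∪ insert e (M.erase q)).erase G').card = p := by
          rw [card_erase_of_mem hGW, hMunion, card_insert_of_notMem he2.2, hM]
          omega
        have hvM' : v ∈ (M ∪ insert e (M.erase q)).erase G' :=
          mem_erase.mpr ⟨Ne.symm hGv, mem_union_left _ hvM⟩
        have hM'col : col ((M ∪ insert e (M.erase q)).erase G') = ν₁ := by
          rw [hminor, h2, hMcol]
        have hM'Q : (M ∪ insert e (M.erase q)).erase G' \ Q = (M \ Q).erase G' := by
          rw [hMunion]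
          ext a
          simp only [mem_sdiff, mem_insert, mem_erase]
          constructor
          · rintro ⟨⟨haG, rfl | haM⟩, haQ⟩
            · exact absurd he2.1 haQ
            · exact ⟨haG, haM, haQ⟩
          · rintro ⟨haG, haM, haQ⟩
            exact ⟨⟨haG, Or.inr haM⟩, haQ⟩
        have hM'Qcard : ((M ∪ insert e (M.erase q)).erase G' \ Q).card = k - 1 := by
          rw [hM'Q, card_erase_of_mem hGMQ, hMQk]
        exact IH (k - 1) hklt _ hM'Qcard hM'card hvM' hM'col
    · obtain ⟨G₃, μ₃, _, hpal, _, _, _, hmono₃, _, _⟩ :=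
        lemS hc hp hM hCcard hK hMC hCM hvM hvC hvK
          (by rw [hMcol]; exact fun h => hγ1 h.symm)
          (by rw [hKcol, hMcol]; exact hμν)
          (by rw [hKcol]; exact fun h => hγ2 h.symm)
      have hμ₃ : μ₁ ≠ μ₃ := by
        rcases hpal with ⟨h1, _⟩ | ⟨h1, _⟩
        · rw [h1, hMcol]; exact hμν
        · rw [h1]; exact fun h => hγ2 h.symm
      exact ntrick hp hpn hμ₃ mono₁ hmono₃

/-- Adjacent case: an adjacent pair of distinctly colored edges through `v`,
plus a third color through `v`, is impossible. -/
lemma lemAdj (hc : RainbowCancellative n p col) (hp : 3 ≤ p) (hpn : p ≤ n)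
    {X C Z : Finset (Fin n)} {v q e : Fin n}
    (hX : X.card = p) (hC : C.card = p) (hZ : Z.card = p)
    (hd1 : X \ C = {q}) (hd2 : C \ X = {e})
    (hvX : v ∈ X) (hvC : v ∈ C) (hvZ : v ∈ Z)
    (hcol : col X ≠ col C) (hz1 : col Z ≠ col X) (hz2 : col Z ≠ col C) : False := by
  obtain ⟨G, μ, μ', hpal, hGW, hGv, hGZ, hmono, hallW, hminor⟩ :=
    lemS hc hp hX hC hZ hd1 hd2 hvX hvC hvZ hcol hz1 hz2
  have heX : e ∉ X := (mem_sdiff.mp (hd2 ▸ mem_singleton_self e)).2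
  have hW1 : X ∪ C = insert e X := by
    ext a
    simp only [mem_union, mem_insert]
    constructor
    · rintro (h | h)
      · exact Or.inr h
      · by_cases h2 : a ∈ X
        · exact Or.inr h2
        · left
          have h3 : a ∈ C \ X := mem_sdiff.mpr ⟨h, h2⟩
          rwa [hd2, mem_singleton] at h3
    · rintro (h | h)
      · exact Or.inr (h ▸ (mem_sdiff.mp (hd2 ▸ mem_singleton_self e)).1)
      · exact Or.inl h
  have hWcard : (X ∪ C).card = p + 1 := by
    rw [hW1, card_insert_of_notMem heX, hX]
  obtain ⟨r, hr⟩ : ∃ r, r ∈ ((X ∪ C).erase v).erase G := by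
    have h1 : ((X ∪ C).erase v).card = p := by
      rw [card_erase_of_mem (mem_union_left _ hvX), hWcard]
      omega
    have h2 : p - 1 ≤ (((X ∪ C).erase v).erase G).card := by
      have := pred_card_le_card_erase (s := (X ∪ C).erase v) (a := G)
      omega
    have h3 : (((X ∪ C).erase v).erase G).Nonempty := by
      rw [← card_pos]
      omega
    exact h3
  have hrG : r ≠ G := (mem_erase.mp hr).1
  have hrv : r ≠ v := (mem_erase.mp (mem_of_mem_erase hr)).1
  have hrW : r ∈ X ∪ C := mem_of_mem_erase (mem_of_mem_erase hr)
  have hKcol : col ((X ∪ C).erase r) = μ := hallW r hrW hrG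
  have hKcard : ((X ∪ C).erase r).card = p := by
    rw [card_erase_of_mem hrW, hWcard]
    omega
  have hvK : v ∈ (X ∪ C).erase r := mem_erase.mpr ⟨Ne.symm hrv, mem_union_left _ hvX⟩
  have hMcard : ((X ∪ C).erase G).card = p := by
    rw [card_erase_of_mem hGW, hWcard]
    omega
  have hvM : v ∈ (X ∪ C).erase G := mem_erase.mpr ⟨Ne.symm hGv, mem_union_left _ hvX⟩
  have hμμ' : μ ≠ μ' := by
    rcases hpal with ⟨h1, h2⟩ | ⟨h1, h2⟩ <;> rw [h1, h2]
    · exact hcol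
    · exact Ne.symm hcol
  have hz1' : col Z ≠ μ := by
    rcases hpal with ⟨h1, _⟩ | ⟨h1, _⟩ <;> rw [h1] <;> assumption
  have hz2' : col Z ≠ μ' := by
    rcases hpal with ⟨_, h2⟩ | ⟨_, h2⟩ <;> rw [h2] <;> assumption
  exact lemP3 hc hp hpn hμμ' hz1' hz2' hmono hKcard hvK hKcol hZ hvZ rfl _ hMcard hvM hminor

/-- Lemma V: no vertex lies in three edges of pairwise distinct colors. -/
lemma lemV (hc : RainbowCancellative n p col) (hp : 3 ≤ p) (hpn : p ≤ n) :
    ∀ (v : Fin n) (X Y Z : Finset (Fin n)), X.card = p → Y.card = p → Z.card = p →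
      v ∈ X → v ∈ Y → v ∈ Z →
      col X ≠ col Y → col X ≠ col Z → col Y ≠ col Z → False := by
  suffices h : ∀ k, ∀ (v : Fin n) (X Y Z : Finset (Fin n)), (X \ Y).card = k →
      X.card = p → Y.card = p → Z.card = p → v ∈ X → v ∈ Y → v ∈ Z →
      col X ≠ col Y → col X ≠ col Z → col Y ≠ col Z → False by
    intro v X Y Z hX hY hZ h1 h2 h3 c1 c2 c3
    exact h _ v X Y Z rfl hX hY hZ h1 h2 h3 c1 c2 c3
  intro k
  induction k using Nat.strong_induction_on with
  | _ k IH =>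
  intro v X Y Z hXYk hX hY hZ hvX hvY hvZ c1 c2 c3
  have hne : X ≠ Y := fun h => c1 (by rw [h])
  have hXY : (X \ Y).Nonempty := by
    rw [nonempty_iff_ne_empty]
    intro h
    exact hne (eq_of_subset_of_card_le (sdiff_eq_empty_iff_subset.mp h)
      (le_of_eq (hY.trans hX.symm)))
  have hYX : (Y \ X).card = (X \ Y).card := by
    have h1 := card_sdiff_add_card_inter X Y
    have h2 := card_sdiff_add_card_inter Y X
    rw [inter_comm] at h2
    rw [hX] at h1
    rw [hY] at h2
    omega
  by_cases hk1 : (X \ Y).card = 1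
  · obtain ⟨q, hq⟩ := card_eq_one.mp hk1
    obtain ⟨e, he⟩ := card_eq_one.mp (hYX.trans hk1)
    exact lemAdj hc hp hpn hX hY hZ hq he hvX hvY hvZ c1 (Ne.symm c2) (Ne.symm c3)
  · obtain ⟨q, hqmem⟩ := hXY
    have hq2 := mem_sdiff.mp hqmem
    obtain ⟨e, hemem⟩ : (Y \ X).Nonempty := by
      rw [← card_pos, hYX]
      exact card_pos.mpr ⟨q, hqmem⟩
    have he2 := mem_sdiff.mp hemem
    have hqv : q ≠ v := fun h => hq2.2 (h ▸ hvY)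
    have hCcard : (insert e (X.erase q)).card = p := by rw [swap_card hq2.1 he2.2, hX]
    have hvC : v ∈ insert e (X.erase q) :=
      mem_insert_of_mem (mem_erase.mpr ⟨Ne.symm hqv, hvX⟩)
    have hXC : X \ insert e (X.erase q) = {q} := swap_sdiff₁ hq2.1 he2.2
    have hCX : insert e (X.erase q) \ X = {e} := swap_sdiff₂ hq2.1 he2.2
    have hCY : insert e (X.erase q) \ Y = (X \ Y).erase q := by
      ext a
      simp only [mem_sdiff, mem_insert, mem_erase]
      constructor
      · rintro ⟨rfl | ⟨haq, haM⟩, haQ⟩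
        · exact absurd he2.1 haQ
        · exact ⟨haq, haM, haQ⟩
      · rintro ⟨haq, haM, haQ⟩
        exact ⟨Or.inr ⟨haq, haM⟩, haQ⟩
    have hCYcard : (insert e (X.erase q) \ Y).card = k - 1 := by
      rw [hCY, card_erase_of_mem hqmem, hXYk]
    have hkpos : 1 ≤ k := by
      rw [← hXYk]
      exact card_pos.mpr ⟨q, hqmem⟩
    have hklt : k - 1 < k := by omega
    by_cases hγ1 : col (insert e (X.erase q)) = col X
    · exact IH (k - 1) hklt v _ Y Z hCYcard hCcard hY hZ hvC hvY hvZ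
        (by rw [hγ1]; exact c1) (by rw [hγ1]; exact c2) c3
    by_cases hγ2 : col (insert e (X.erase q)) = col Y
    · exact lemAdj hc hp hpn hX hCcard hZ hXC hCX hvX hvC hvZ
        (by rw [hγ2]; exact c1) (Ne.symm c2) (by rw [hγ2]; exact Ne.symm c3)
    by_cases hγ3 : col (insert e (X.erase q)) = col Z
    · exact lemAdj hc hp hpn hX hCcard hY hXC hCX hvX hvC hvY
        (by rw [hγ3]; exact c2) (Ne.symm c1) (by rw [hγ3]; exact c3)
    · exact IH (k - 1) hklt v _ Y Z hCYcard hCcard hY hZ hvC hvY hvZ hγ2 hγ3 c3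

end RCAux

/-- Structure of extremal rainbow cancellative colorings: every rainbow
cancellative edge-coloring of `K_n^(p)` using exactly `1 + ⌊n/p⌋` colors contains
a vertex set `U` of size `p⌊n/p⌋` containing `⌊n/p⌋` pairwise disjoint edges of
pairwise distinct colors, all other `p`-subsets of `U` receiving one remaining
common color. -/


theorem extremal_structure (n p : ℕ) (hp : 3 ≤ p) (hn : p + 1 ≤ n)
    (col : Finset (Fin n) → ℕ)
    (hc : RainbowCancellative n p col)
    (hmax : numColors n p col = 1 + n / p) :
    ∃ (U : Finset (Fin n)) (g : Fin (n / p) → Finset (Fin n)) (α : ℕ),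
      U.card = p * (n / p) ∧
      (∀ i, g i ⊆ U) ∧
      (∀ i, (g i).card = p) ∧
      (∀ i j, i ≠ j → Disjoint (g i) (g j)) ∧
      (∀ i j, i ≠ j → col (g i) ≠ col (g j)) ∧
      (∀ i, col (g i) ≠ α) ∧
      (∀ e : Finset (Fin n), e ⊆ U → e.card = p → (∀ i, e ≠ g i) → col e = α) := by
  classical
  open Finset in
  have hp0 : 0 < p := by omega
  have hpn : p ≤ n := by omega
  set m := n / p with hm
  set colors := ((Finset.univ : Finset (Finset (Fin n))).filter (fun e => e.card = p)).image col
    with hcolorsdef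
  have hcolors : colors.card = m + 1 := by
    have h := hmax
    unfold numColors at h
    rw [hcolorsdef]
    omega
  have hmemcolors : ∀ {E : Finset (Fin n)}, E.card = p → col E ∈ colors := by
    intro E hE
    exact mem_image_of_mem col (mem_filter.mpr ⟨mem_univ E, hE⟩)
  have hexrep : ∀ c : ℕ, ∃ E : Finset (Fin n), c ∈ colors → (E.card = p ∧ col E = c) := by
    intro c
    by_cases h : c ∈ colors
    · obtain ⟨E, hE, hcolE⟩ := mem_image.mp h
      exact ⟨E, fun _ => ⟨(mem_filter.mp hE).2, hcolE⟩⟩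
    · exact ⟨∅, fun h' => absurd h' h⟩
  choose rep hrep using hexrep
  have hstar : ∀ {A B E : Finset (Fin n)} {v : Fin n}, A.card = p → B.card = p → E.card = p →
      v ∈ A → v ∈ B → v ∈ E → col A ≠ col B → col E = col A ∨ col E = col B := by
    intro A B E v hA hB hE h1 h2 h3 hAB
    by_contra h
    push_neg at h
    exact RCAux.lemV hc hp hpn v A B E hA hB hE h1 h2 h3 hAB (Ne.symm h.1) (Ne.symm h.2)
  -- a clash exists
  have hclash : ∃ (A B : Finset (Fin n)) (v : Fin n),
      A.card = p ∧ B.card = p ∧ v ∈ A ∧ v ∈ B ∧ col A ≠ col B := by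
    by_contra hno
    push_neg at hno
    have hdisj : ∀ c ∈ colors, ∀ d ∈ colors, c ≠ d → Disjoint (rep c) (rep d) := by
      intro c hcm d hdm hcd
      by_contra hnd
      obtain ⟨v, hv1, hv2⟩ := not_disjoint_iff.mp hnd
      have h1 := hrep c hcm
      have h2 := hrep d hdm
      have := hno (rep c) (rep d) v h1.1 h2.1 hv1 hv2
      rw [h1.2, h2.2] at this
      exact hcd this
    have hbU : (colors.biUnion rep).card = colors.card * p := by
      rw [card_biUnion hdisj, Finset.sum_congr rfl (fun c hcm => (hrep c hcm).1),
        sum_const, smul_eq_mul]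
    have hle : (colors.biUnion rep).card ≤ n := by
      have h := card_le_univ (colors.biUnion rep)
      rwa [Fintype.card_fin] at h
    have h1 := Nat.div_add_mod n p
    rw [← hm] at h1
    have h2 : n % p < p := Nat.mod_lt _ hp0
    have h3 : (m + 1) * p = p * m + p := by ring
    rw [hbU, hcolors] at hle
    omega
  obtain ⟨A₀, B₀, v₀, hA₀, hB₀, hv₀A, hv₀B, hcol₀⟩ := hclash
  set Cl : ℕ → ℕ → Prop := fun a b => a ≠ b ∧ ∃ (A B : Finset (Fin n)) (v : Fin n),
    A.card = p ∧ B.card = p ∧ v ∈ A ∧ v ∈ B ∧ col A = a ∧ col B = b with hCldef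
  have hClsymm : ∀ {a b}, Cl a b → Cl b a := by
    rintro a b ⟨hne, A, B, v, hA, hB, h1, h2, h3, h4⟩
    exact ⟨Ne.symm hne, B, A, v, hB, hA, h2, h1, h4, h3⟩
  have hF1 : ∀ {a b c d}, Cl a b → Cl c d → a = c ∨ a = d ∨ b = c ∨ b = d := by
    intro a b c d h1 h2
    by_contra hcon
    push_neg at hcon
    obtain ⟨hne1, A, B, v, hA, hB, hvA, hvB, hca, hcb⟩ := h1
    obtain ⟨hne2, A', B', v', hA', hB', hvA', hvB', hcc, hcd⟩ := h2
    have h2le : ({v, v'} : Finset (Fin n)).card ≤ p := by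
      refine le_trans ?_ hp
      apply (card_insert_le _ _).trans
      simp
    obtain ⟨E, hsub, hEcard⟩ := exists_superset_card_eq h2le
      (by rw [Fintype.card_fin]; exact hpn)
    have hvE : v ∈ E := hsub (by simp)
    have hv'E : v' ∈ E := hsub (by simp)
    have e1 : col E = a ∨ col E = b := by
      have h := hstar hA hB hEcard hvA hvB hvE (by rw [hca, hcb]; exact hne1)
      rwa [hca, hcb] at h
    have e2 : col E = c ∨ col E = d := by
      have h := hstar hA' hB' hEcard hvA' hvB' hv'E (by rw [hcc, hcd]; exact hne2)
      rwa [hcc, hcd] at h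
    rcases e1 with h | h <;> rcases e2 with h' | h' <;> omega
  have hF2 : ∀ {a b c}, Cl a b → Cl b c → Cl a c → False := by
    intro a b c h1 h2 h3
    obtain ⟨hne1, A1, B1, v1, hA1, hB1, hvA1, hvB1, hca1, hcb1⟩ := h1
    obtain ⟨hne2, A2, B2, v2, hA2, hB2, hvA2, hvB2, hca2, hcb2⟩ := h2
    obtain ⟨hne3, A3, B3, v3, hA3, hB3, hvA3, hvB3, hca3, hcb3⟩ := h3
    have h3le : ({v1, v2, v3} : Finset (Fin n)).card ≤ p := by
      refine le_trans ?_ hp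
      apply (card_insert_le _ _).trans
      apply Nat.succ_le_succ
      apply (card_insert_le _ _).trans
      simp
    obtain ⟨E, hsub, hEcard⟩ := exists_superset_card_eq h3le
      (by rw [Fintype.card_fin]; exact hpn)
    have hv1E : v1 ∈ E := hsub (by simp)
    have hv2E : v2 ∈ E := hsub (by simp)
    have hv3E : v3 ∈ E := hsub (by simp)
    have e1 : col E = a ∨ col E = b := by
      have h := hstar hA1 hB1 hEcard hvA1 hvB1 hv1E (by rw [hca1, hcb1]; exact hne1)
      rwa [hca1, hcb1] at h
    have e2 : col E = b ∨ col E = c := by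
      have h := hstar hA2 hB2 hEcard hvA2 hvB2 hv2E (by rw [hca2, hcb2]; exact hne2)
      rwa [hca2, hcb2] at h
    have e3 : col E = a ∨ col E = c := by
      have h := hstar hA3 hB3 hEcard hvA3 hvB3 hv3E (by rw [hca3, hcb3]; exact hne3)
      rwa [hca3, hcb3] at h
    rcases e1 with h | h <;> rcases e2 with h' | h' <;> rcases e3 with h'' | h'' <;> omega
  obtain ⟨α, hαcl, hαmem⟩ : ∃ α, (∀ a b, Cl a b → a = α ∨ b = α) ∧ α ∈ colors := by
    have hCl₀ : Cl (col A₀) (col B₀) := ⟨hcol₀, A₀, B₀, v₀, hA₀, hB₀, hv₀A, hv₀B, rfl, rfl⟩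
    by_cases hall : ∀ a b, Cl a b → a = col A₀ ∨ b = col A₀
    · exact ⟨col A₀, hall, hmemcolors hA₀⟩
    · push_neg at hall
      obtain ⟨c, d, hcd, hc1, hd1⟩ := hall
      have hbig : ∃ e', Cl (col B₀) e' ∧ e' ≠ col A₀ ∧ e' ≠ col B₀ := by
        rcases hF1 hcd hCl₀ with h | h | h | h
        · exact absurd h hc1
        · rw [h] at hcd
          exact ⟨d, hcd, hd1, Ne.symm hcd.1⟩
        · exact absurd h hd1
        · rw [h] at hcd
          exact ⟨c, hClsymm hcd, hc1, Ne.symm (hClsymm hcd).1⟩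
      obtain ⟨e', hbe, he1, he2⟩ := hbig
      refine ⟨col B₀, ?_, hmemcolors hB₀⟩
      intro a b hab
      by_contra hcon
      push_neg at hcon
      rcases hF1 hab hCl₀ with h | h | h | h
      · rw [h] at hab
        rcases hF1 hab hbe with h' | h' | h' | h'
        · exact hCl₀.1 h'
        · exact he1 h'.symm
        · exact hcon.2 h'
        · rw [h'] at hab
          exact hF2 hCl₀ hbe hab
      · exact hcon.1 h
      · rw [h] at hab
        have hab' := hClsymm hab
        rcases hF1 hab' hbe with h' | h' | h' | h'
        · exact hCl₀.1 h'
        · exact he1 h'.symm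
        · exact hcon.1 h'
        · rw [h'] at hab'
          exact hF2 hCl₀ hbe hab'
      · exact hcon.2 h
  have hdisj2 : ∀ A B : Finset (Fin n), A.card = p → B.card = p → col A ≠ col B →
      col A ≠ α → col B ≠ α → Disjoint A B := by
    intro A B hA hB hAB h1 h2
    by_contra hnd
    obtain ⟨v, hv1, hv2⟩ := not_disjoint_iff.mp hnd
    have hCl1 : Cl (col A) (col B) := ⟨hAB, A, B, v, hA, hB, hv1, hv2, rfl, rfl⟩
    rcases hαcl _ _ hCl1 with h | h
    · exact h1 h
    · exact h2 h
  set S := colors.erase α with hSdef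
  have hScard : S.card = m := by
    rw [hSdef, card_erase_of_mem hαmem, hcolors]
    simp
  let equivS : {x // x ∈ S} ≃ Fin m := S.equivFinOfCardEq hScard
  set cf : Fin m → ℕ := fun i => ((equivS.symm i : {x // x ∈ S}) : ℕ) with hcfdef
  have hcfS : ∀ i, cf i ∈ S := fun i => (equivS.symm i).2
  have hcfinj : ∀ i j : Fin m, i ≠ j → cf i ≠ cf j := by
    intro i j hij h
    exact hij (equivS.symm.injective (Subtype.ext h))
  set g : Fin m → Finset (Fin n) := fun i => rep (cf i) with hgdef
  have hcfcolors : ∀ i, cf i ∈ colors := fun i => mem_of_mem_erase (hcfS i)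
  have hgcard : ∀ i, (g i).card = p := fun i => (hrep (cf i) (hcfcolors i)).1
  have hgcol : ∀ i, col (g i) = cf i := fun i => (hrep (cf i) (hcfcolors i)).2
  have hgα : ∀ i, col (g i) ≠ α := by
    intro i
    rw [hgcol]
    exact (mem_erase.mp (hcfS i)).1
  have hgne : ∀ i j, i ≠ j → col (g i) ≠ col (g j) := by
    intro i j hij
    rw [hgcol, hgcol]
    exact hcfinj i j hij
  have hgdisj : ∀ i j, i ≠ j → Disjoint (g i) (g j) :=
    fun i j hij => hdisj2 _ _ (hgcard i) (hgcard j) (hgne i j hij) (hgα i) (hgα j)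
  set U := Finset.univ.biUnion g with hUdef
  have hgU : ∀ i, g i ⊆ U := fun i => subset_biUnion_of_mem g (mem_univ i)
  have hUcard : U.card = p * m := by
    rw [hUdef, card_biUnion (fun i _ j _ hij => hgdisj i j hij),
      Finset.sum_congr rfl (fun i _ => hgcard i), sum_const, card_univ, Fintype.card_fin,
      smul_eq_mul, mul_comm]
  refine ⟨U, g, α, hUcard, hgU, hgcard, hgdisj, hgne, hgα, ?_⟩
  intro e hsub hecard hne
  by_contra hneα
  have hecol : col e ∈ S := mem_erase.mpr ⟨hneα, hmemcolors hecard⟩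
  have hcfi₀ : cf (equivS ⟨col e, hecol⟩) = col e := by
    rw [hcfdef]
    simp
  have hsub2 : e ⊆ g (equivS ⟨col e, hecol⟩) := by
    intro x hx
    obtain ⟨j, _, hj⟩ := mem_biUnion.mp (hsub hx)
    by_cases hji : j = equivS ⟨col e, hecol⟩
    · rwa [← hji]
    · exfalso
      have hcne : col e ≠ col (g j) := by
        rw [hgcol, ← hcfi₀]
        exact Ne.symm (hcfinj _ _ hji)
      have hd := hdisj2 e (g j) hecard (hgcard j) hcne hneα (hgα j)
      exact (disjoint_left.mp hd hx) hj
  exact hne _ (eq_of_subset_of_card_le hsub2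
    (le_of_eq ((hgcard _).trans hecard.symm)))
end

section
/- Let n ≥ 5 be an integer. If an edge-coloring of K_n^(3) is rainbow F5-free, then it is rainbow F4-free; consequently it is rainbow cancellative (contains no three edges A, B, C with pairwise distinct colors and A △ B ⊆ C). -/
/-- Rainbow `F4`-free: no four distinct vertices `a b c d` such that the triples
`abc, abd, bcd` receive pairwise distinct colors. -/
def RainbowF4Free (n : ℕ) (col : Finset (Fin n) → ℕ) : Prop :=
  ∀ a b c d : Fin n, a ≠ b → a ≠ c → a ≠ d → b ≠ c → b ≠ d → c ≠ d →
    ¬ (col {a, b, c} ≠ col {a, b, d} ∧ col {a, b, c} ≠ col {b, c, d} ∧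
       col {a, b, d} ≠ col {b, c, d})

/-- Rainbow `F5`-free: no five distinct vertices `a b c d e` such that the triples
`abc, abd, cde` receive pairwise distinct colors. -/
def RainbowF5Free (n : ℕ) (col : Finset (Fin n) → ℕ) : Prop :=
  ∀ a b c d e : Fin n,
    a ≠ b → a ≠ c → a ≠ d → a ≠ e → b ≠ c → b ≠ d → b ≠ e → c ≠ d → c ≠ e → d ≠ e →
    ¬ (col {a, b, c} ≠ col {a, b, d} ∧ col {a, b, c} ≠ col {c, d, e} ∧
       col {a, b, d} ≠ col {c, d, e})


section TriplePerm
variable {α : Type*} [DecidableEq α] (x y z : α)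

lemma tp213 : ({x, y, z} : Finset α) = {y, x, z} := Finset.insert_comm x y {z}
lemma tp132 : ({x, y, z} : Finset α) = {x, z, y} := congrArg (insert x) (Finset.pair_comm y z)
lemma tp231 : ({x, y, z} : Finset α) = {y, z, x} := (tp213 x y z).trans (tp132 y x z)
lemma tp312 : ({x, y, z} : Finset α) = {z, x, y} := (tp132 x y z).trans (tp213 x z y)
lemma tp321 : ({x, y, z} : Finset α) = {z, y, x} := (tp231 x y z).trans (tp213 y z x)

end TriplePerm

/-- Convenient disjunctive form of the rainbow `F5`-free condition, with the three
edges given as arbitrary finsets together with proofs that they are the right triples. -/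
lemma F5ap {n : ℕ} {col : Finset (Fin n) → ℕ} (h : RainbowF5Free n col)
    (x y z w v : Fin n)
    (h1 : x ≠ y) (h2 : x ≠ z) (h3 : x ≠ w) (h4 : x ≠ v) (h5 : y ≠ z) (h6 : y ≠ w)
    (h7 : y ≠ v) (h8 : z ≠ w) (h9 : z ≠ v) (h10 : w ≠ v)
    {E1 E2 E3 : Finset (Fin n)}
    (e1 : E1 = {x, y, z}) (e2 : E2 = {x, y, w}) (e3 : E3 = {z, w, v}) :
    col E1 = col E2 ∨ col E1 = col E3 ∨ col E2 = col E3 := by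
  have := h x y z w v h1 h2 h3 h4 h5 h6 h7 h8 h9 h10
  subst e1 e2 e3
  tauto

set_option maxHeartbeats 1000000 in
theorem rainbowF4Free_of_F5Free (n : ℕ) (hn : 5 ≤ n) (col : Finset (Fin n) → ℕ)
    (h : RainbowF5Free n col) : RainbowF4Free n col := by
  intro a b c d hab hac had hbc hbd hcd
  rintro ⟨hXY, hXZ, hYZ⟩
  have hcard : ({a, b, c, d} : Finset (Fin n)).card < (Finset.univ : Finset (Fin n)).card := by
    have h4 : ({a, b, c, d} : Finset (Fin n)).card ≤ 4 := by
      apply le_trans (Finset.card_insert_le _ _)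
      apply Nat.succ_le_succ
      apply le_trans (Finset.card_insert_le _ _)
      apply Nat.succ_le_succ
      apply le_trans (Finset.card_insert_le _ _)
      simp
    have : (Finset.univ : Finset (Fin n)).card = n := by simp
    omega
  have hne_univ : ({a, b, c, d} : Finset (Fin n)) ≠ Finset.univ := by
    intro h'
    rw [h'] at hcard
    exact lt_irrefl _ hcard
  obtain ⟨e, -, he⟩ := Finset.exists_of_ssubset (Finset.ssubset_univ_iff.mpr hne_univ)
  simp only [Finset.mem_insert, Finset.mem_singleton, not_or] at he
  obtain ⟨hea, heb, hec, hed⟩ := he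
  have hae : a ≠ e := fun h' => hea h'.symm
  have hbe : b ≠ e := fun h' => heb h'.symm
  have hce : c ≠ e := fun h' => hec h'.symm
  have hde : d ≠ e := fun h' => hed h'.symm
  have hba : b ≠ a := hab.symm
  have hca : c ≠ a := hac.symm
  have hcb : c ≠ b := hbc.symm
  have hda : d ≠ a := had.symm
  have hdb : d ≠ b := hbd.symm
  have hdc : d ≠ c := hcd.symm
  have hea : e ≠ a := hae.symm
  have heb : e ≠ b := hbe.symm
  have hec : e ≠ c := hce.symm
  have hed : e ≠ d := hde.symm
  have s1 := F5ap h a b c d e hab hac had hae hbc hbd hbe hcd hce hde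
    rfl rfl rfl
  rcases s1 with hcs | hcs | hcs
  · exact hXY hcs
  · -- Case A: col {a,b,c} = col {c,d,e}
    have s2 := F5ap h c e d a b hce hcd hca hcb hed hea heb hda hdb hab
      (tp132 c d e) (tp231 a c e) (tp312 a b d)
    rcases s2 with h2 | h2 | h2
    · have s3 := F5ap h b d a c e hbd hba hbc hbe hda hdc hde hac hae hce
        (tp231 a b d) (tp132 b c d) rfl
      rcases s3 with hs3 | hs3 | hs3
      · exact absurd hs3 hYZ
      · exact absurd ((hcs.trans h2).trans hs3.symm) hXY
      · exact absurd ((hcs.trans h2).trans hs3.symm) hXZ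
    · exact absurd (hcs.trans h2) hXY
    · have s4 := F5ap h a b d e c hab had hae hac hbd hbe hbc hde hdc hec
        rfl rfl (tp231 c d e)
      have s5 := F5ap h a e b c d hae hab hac had heb hec hed hbc hbd hcd
        (tp132 a b e) (tp132 a c e) rfl
      have s6 := F5ap h c d b e a hcd hcb hce hca hdb hde hda hbe hba hea
        (tp231 b c d) rfl (tp231 a b e)
      rcases s4 with hs4 | hs4 | hs4
      · rcases s5 with hs5 | hs5 | hs5
        · rcases s6 with hs6 | hs6 | hs6
          · exact absurd (hcs.trans hs6.symm) hXZ
          · exact absurd (hs4.trans hs6.symm) hYZ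
          · exact absurd ((hcs.trans hs6).trans hs4.symm) hXY
        · exact absurd (hs4.trans hs5) hYZ
        · exact absurd (h2.symm.trans hs5) hYZ
      · exact absurd (hcs.trans hs4.symm) hXY
      · rcases s5 with hs5 | hs5 | hs5
        · exact absurd (((hcs.trans hs4.symm).trans hs5).trans h2) hXY
        · exact absurd ((hcs.trans hs4.symm).trans hs5) hXZ
        · exact absurd (h2.symm.trans hs5) hYZ
  · -- Case B: col {a,b,d} = col {c,d,e}
    have s7 := F5ap h d e c a b hde hdc hda hdb hec hea heb hca hcb hab
      (tp231 c d e) (tp231 a d e) (tp312 a b c)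
    rcases s7 with h2 | h2 | h2
    · have s8 := F5ap h b c a d e hbc hba hbd hbe hca hcd hce had hae hde
        (tp231 a b c) rfl rfl
      rcases s8 with hs8 | hs8 | hs8
      · exact absurd hs8 hXZ
      · exact absurd ((hs8.trans h2.symm).trans hcs.symm) hXY
      · exact absurd ((hcs.trans h2).trans hs8.symm) hYZ
    · exact absurd (h2.symm.trans hcs.symm) hXY
    · have s9 := F5ap h a b c e d hab hac hae had hbc hbe hbd hce hcd hed
        rfl rfl (tp132 c d e)
      have s10 := F5ap h a e b d c hae hab had hac heb hed hec hbd hbc hdc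
        (tp132 a b e) (tp132 a d e) (tp132 b c d)
      have s6 := F5ap h c d b e a hcd hcb hce hca hdb hde hda hbe hba hea
        (tp231 b c d) rfl (tp231 a b e)
      rcases s9 with hs9 | hs9 | hs9
      · rcases s10 with hs10 | hs10 | hs10
        · rcases s6 with hs6 | hs6 | hs6
          · exact absurd (hcs.trans hs6.symm) hYZ
          · exact absurd (hs9.trans hs6.symm) hXZ
          · exact absurd ((hs9.trans hs6.symm).trans hcs.symm) hXY
        · exact absurd (hs9.trans hs10) hXZ
        · exact absurd (h2.symm.trans hs10) hXZ
      · exact absurd (hs9.trans hcs.symm) hXY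
      · rcases s10 with hs10 | hs10 | hs10
        · exact absurd (((h2.symm.trans hs10.symm).trans hs9).trans hcs.symm) hXY
        · exact absurd ((hcs.trans hs9.symm).trans hs10) hYZ
        · exact absurd (h2.symm.trans hs10) hXZ

set_option maxHeartbeats 1000000 in
/-- For `n ≥ 5`, every rainbow `F5`-free edge-coloring of `K_n^(3)` is rainbow
`F4`-free; consequently it is rainbow cancellative. -/
theorem rainbowF5Free_imp (n : ℕ) (hn : 5 ≤ n) (col : Finset (Fin n) → ℕ)
    (h : RainbowF5Free n col) :
    RainbowF4Free n col ∧ RainbowCancellative n 3 col := by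
  have hF4 := rainbowF4Free_of_F5Free n hn col h
  refine ⟨hF4, ?_⟩
  intro A B C hA hB hC hcAB hcAC hcBC hsub
  -- A ≠ B
  have hAB : A ≠ B := fun h' => hcAB (congrArg col h')
  have hABd : Disjoint (A \ B) (B \ A) := by
    apply Finset.disjoint_left.mpr
    intro t ht ht'
    exact (Finset.mem_sdiff.mp ht').2 (Finset.mem_sdiff.mp ht).1
  have hcardsum : (A \ B).card + (B \ A).card ≤ 3 := by
    have := Finset.card_le_card hsub
    rw [Finset.card_union_of_disjoint hABd] at this
    omega
  have hABeq : (A \ B).card = (B \ A).card := by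
    have h1 := Finset.card_sdiff_add_card_inter A B
    have h2 := Finset.card_sdiff_add_card_inter B A
    rw [Finset.inter_comm B A] at h2
    omega
  have hne : (A \ B).Nonempty := by
    rw [Finset.sdiff_nonempty]
    intro h'
    exact hAB (Finset.eq_of_subset_of_card_le h' (by omega))
  have h1 : (A \ B).card = 1 := by
    have := Finset.card_pos.mpr hne
    omega
  have h2 : (B \ A).card = 1 := by omega
  obtain ⟨u, hu⟩ := Finset.card_eq_one.mp h1
  obtain ⟨v, hv⟩ := Finset.card_eq_one.mp h2
  have huAB : u ∈ A \ B := hu ▸ Finset.mem_singleton_self u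
  have hvBA : v ∈ B \ A := hv ▸ Finset.mem_singleton_self v
  have huA : u ∈ A := (Finset.mem_sdiff.mp huAB).1
  have huB : u ∉ B := (Finset.mem_sdiff.mp huAB).2
  have hvB : v ∈ B := (Finset.mem_sdiff.mp hvBA).1
  have hvA : v ∉ A := (Finset.mem_sdiff.mp hvBA).2
  have hintercard : (A ∩ B).card = 2 := by
    have h1' := Finset.card_sdiff_add_card_inter A B
    omega
  obtain ⟨x, y, hxy, hI⟩ := Finset.card_eq_two.mp hintercard
  have hxA : x ∈ A := (Finset.mem_inter.mp (hI ▸ Finset.mem_insert_self x {y})).1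
  have hxB : x ∈ B := (Finset.mem_inter.mp (hI ▸ Finset.mem_insert_self x {y})).2
  have hyI : y ∈ A ∩ B := hI ▸ Finset.mem_insert_of_mem (Finset.mem_singleton_self y)
  have hyA : y ∈ A := (Finset.mem_inter.mp hyI).1
  have hyB : y ∈ B := (Finset.mem_inter.mp hyI).2
  have hxu : x ≠ u := fun h' => huB (h' ▸ hxB)
  have hyu : y ≠ u := fun h' => huB (h' ▸ hyB)
  have hxv : x ≠ v := fun h' => hvA (h' ▸ hxA)
  have hyv : y ≠ v := fun h' => hvA (h' ▸ hyA)
  have huv : u ≠ v := fun h' => hvA (h' ▸ huA)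
  have hcard3 : ∀ (p q r : Fin n), p ≠ q → p ≠ r → q ≠ r →
      ({p, q, r} : Finset (Fin n)).card = 3 := by
    intro p q r h1 h2 h3
    rw [Finset.card_insert_of_notMem (by simp [h1, h2]),
      Finset.card_insert_of_notMem (by simp [h3]), Finset.card_singleton]
  have hAeq : A = {x, y, u} := by
    refine (Finset.eq_of_subset_of_card_le ?_ ?_).symm
    · intro t ht
      simp only [Finset.mem_insert, Finset.mem_singleton] at ht
      rcases ht with rfl | rfl | rfl
      exacts [hxA, hyA, huA]
    · rw [hA, hcard3 x y u hxy hxu hyu]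
  have hBeq : B = {x, y, v} := by
    refine (Finset.eq_of_subset_of_card_le ?_ ?_).symm
    · intro t ht
      simp only [Finset.mem_insert, Finset.mem_singleton] at ht
      rcases ht with rfl | rfl | rfl
      exacts [hxB, hyB, hvB]
    · rw [hB, hcard3 x y v hxy hxv hyv]
  have huC : u ∈ C := hsub (Finset.mem_union_left _ huAB)
  have hvC : v ∈ C := hsub (Finset.mem_union_right _ hvBA)
  have hCdiff : (C \ {u, v}).card = 1 := by
    have hsub2 : ({u, v} : Finset (Fin n)) ⊆ C := by
      intro t ht
      simp only [Finset.mem_insert, Finset.mem_singleton] at ht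
      rcases ht with rfl | rfl
      exacts [huC, hvC]
    rw [Finset.card_sdiff_of_subset hsub2, hC]
    rw [Finset.card_insert_of_notMem (by simp [huv]), Finset.card_singleton]
  obtain ⟨w, hw⟩ := Finset.card_eq_one.mp hCdiff
  have hwmem : w ∈ C \ {u, v} := hw ▸ Finset.mem_singleton_self w
  have hwC : w ∈ C := (Finset.mem_sdiff.mp hwmem).1
  have hwuv : w ∉ ({u, v} : Finset (Fin n)) := (Finset.mem_sdiff.mp hwmem).2
  have hwu : u ≠ w := fun h' => hwuv (by simp [h'.symm])
  have hwv : v ≠ w := fun h' => hwuv (by simp [h'.symm])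
  have hCeq : C = {u, v, w} := by
    refine (Finset.eq_of_subset_of_card_le ?_ ?_).symm
    · intro t ht
      simp only [Finset.mem_insert, Finset.mem_singleton] at ht
      rcases ht with rfl | rfl | rfl
      exacts [huC, hvC, hwC]
    · rw [hC, hcard3 u v w huv hwu hwv]
  by_cases hwx : w = x
  · -- F4 with (y, x, u, v)
    have e1 : A = ({y, x, u} : Finset (Fin n)) := hAeq.trans (tp213 x y u)
    have e2 : B = ({y, x, v} : Finset (Fin n)) := hBeq.trans (tp213 x y v)
    have e3 : C = ({x, u, v} : Finset (Fin n)) := by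
      rw [hCeq, hwx]; exact (tp231 x u v).symm
    refine hF4 y x u v hxy.symm hyu hyv hxu hxv huv ⟨?_, ?_, ?_⟩
    · rw [← e1, ← e2]; exact hcAB
    · rw [← e1, ← e3]; exact hcAC
    · rw [← e2, ← e3]; exact hcBC
  · by_cases hwy : w = y
    · -- F4 with (x, y, u, v)
      have e3 : C = ({y, u, v} : Finset (Fin n)) := by
        rw [hCeq, hwy]; exact (tp231 y u v).symm
      refine hF4 x y u v hxy hxu hxv hyu hyv huv ⟨?_, ?_, ?_⟩
      · rw [← hAeq, ← hBeq]; exact hcAB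
      · rw [← hAeq, ← e3]; exact hcAC
      · rw [← hBeq, ← e3]; exact hcBC
    · -- F5 with (x, y, u, v, w)
      have hxw : x ≠ w := fun h' => hwx h'.symm
      have hyw : y ≠ w := fun h' => hwy h'.symm
      refine h x y u v w hxy hxu hxv hxw hyu hyv hyw huv hwu hwv ⟨?_, ?_, ?_⟩
      · rw [← hAeq, ← hBeq]; exact hcAB
      · rw [← hAeq, ← hCeq]; exact hcAC
      · rw [← hBeq, ← hCeq]; exact hcBC
end

section
/- Let p ≥ 3 and n ≥ p be integers, and let c be a rainbow cancellative edge-coloring of K_n^(p). Then there do not exist a (p−1)-element vertex set X and three distinct vertices x1, x2, x3 outside X such that the three edges X ∪ {x1}, X ∪ {x2}, X ∪ {x3} receive pairwise distinct colors. -/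
section Aux

variable {α : Type*} [DecidableEq α]

lemma sdP1 {X : Finset α} {a b : α} :
    (insert a X \ insert b X) ∪ (insert b X \ insert a X) ⊆ ({a, b} : Finset α) := by
  intro t ht
  simp only [Finset.mem_union, Finset.mem_sdiff, Finset.mem_insert, Finset.mem_singleton,
    not_or] at ht ⊢
  tauto

lemma sdP2 {X : Finset α} {u v y z : α} :
    (insert u (insert v (X.erase y)) \ insert u (insert v (X.erase z))) ∪
      (insert u (insert v (X.erase z)) \ insert u (insert v (X.erase y))) ⊆
      ({y, z} : Finset α) := by
  intro t ht
  simp only [Finset.mem_union, Finset.mem_sdiff, Finset.mem_insert, Finset.mem_erase,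
    Finset.mem_singleton, not_or] at ht ⊢
  tauto

lemma sdP3 {X : Finset α} {a u y : α} :
    (insert a X \ insert u (insert a (X.erase y))) ∪
      (insert u (insert a (X.erase y)) \ insert a X) ⊆ ({y, u} : Finset α) := by
  intro t ht
  simp only [Finset.mem_union, Finset.mem_sdiff, Finset.mem_insert, Finset.mem_erase,
    Finset.mem_singleton, not_or] at ht ⊢
  tauto

lemma sdP3' {X : Finset α} {a u y : α} :
    (insert a X \ insert a (insert u (X.erase y))) ∪
      (insert a (insert u (X.erase y)) \ insert a X) ⊆ ({y, u} : Finset α) := by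
  intro t ht
  simp only [Finset.mem_union, Finset.mem_sdiff, Finset.mem_insert, Finset.mem_erase,
    Finset.mem_singleton, not_or] at ht ⊢
  tauto

end Aux

lemma colors_contra (c1 c2 c3 d12 d13 d23 e12 e13 e23 : ℕ)
    (hc12 : c1 ≠ c2) (hc13 : c1 ≠ c3) (hc23 : c2 ≠ c3)
    (K1 : c1 = c2 ∨ c1 = d12 ∨ c2 = d12)
    (K2 : c1 = c3 ∨ c1 = d13 ∨ c3 = d13)
    (K3 : c2 = c3 ∨ c2 = d23 ∨ c3 = d23)
    (K1e : c1 = c2 ∨ c1 = e12 ∨ c2 = e12)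
    (K2e : c1 = c3 ∨ c1 = e13 ∨ c3 = e13)
    (K3e : c2 = c3 ∨ c2 = e23 ∨ c3 = e23)
    (K4 : d12 = e12 ∨ d12 = c3 ∨ e12 = c3)
    (K5 : d13 = e13 ∨ d13 = c2 ∨ e13 = c2)
    (K6 : d23 = e23 ∨ d23 = c1 ∨ e23 = c1)
    (K7 : c3 = d23 ∨ c3 = e12 ∨ d23 = e12)
    (K8 : c2 = d23 ∨ c2 = e13 ∨ d23 = e13)
    (K9 : c3 = d13 ∨ c3 = e12 ∨ d13 = e12)
    (K10 : c1 = d13 ∨ c1 = e23 ∨ d13 = e23)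
    (K11 : c1 = d12 ∨ c1 = e23 ∨ d12 = e23)
    (K12 : c2 = d12 ∨ c2 = e13 ∨ d12 = e13) : False := by
  rcases K1 with h | h | h
  · exact hc12 h
  · -- d12 = c1
    have he13 : e13 = c1 := by
      rcases K12 with h' | h' | h'
      · exact absurd (h.trans h'.symm) hc12
      · rcases K2e with h'' | h'' | h''
        · exact absurd h'' hc13
        · exact absurd (h''.trans h'.symm) hc12
        · exact absurd (h'.trans h''.symm) hc23
      · exact (h.trans h').symm
    have hd13 : d13 = c1 := by
      rcases K5 with h' | h' | h'
      · exact h'.trans he13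
      · rcases K2 with h'' | h'' | h''
        · exact absurd h'' hc13
        · exact absurd (h''.trans h') hc12
        · exact absurd (h''.trans h').symm hc23
      · exact absurd (he13.symm.trans h') hc12
    have hd23 : d23 = c2 := by
      rcases K8 with h' | h' | h'
      · exact h'.symm
      · exact absurd (h'.trans he13).symm hc12
      · have hd : d23 = c1 := h'.trans he13
        rcases K3 with h'' | h'' | h''
        · exact absurd h'' hc23
        · exact absurd (h''.trans hd).symm hc12
        · exact absurd (h''.trans hd).symm hc13
    have he12 : e12 = c2 := by
      rcases K7 with h' | h' | h'
      · exact absurd (h'.trans hd23).symm hc23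
      · rcases K1e with h'' | h'' | h''
        · exact absurd h'' hc12
        · exact absurd (h''.trans h'.symm) hc13
        · exact absurd (h''.trans h'.symm) hc23
      · exact h'.symm.trans hd23
    rcases K4 with h' | h' | h'
    · exact hc12 (h.trans (h'.trans he12))
    · exact hc13 (h.trans h')
    · exact hc23 (he12.symm.trans h')
  · -- d12 = c2
    have he12 : e12 = c2 := by
      rcases K4 with h' | h' | h'
      · exact h'.symm.trans h.symm
      · exact absurd (h.trans h') hc23
      · rcases K1e with h'' | h'' | h''
        · exact absurd h'' hc12
        · exact absurd (h''.trans h') hc13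
        · exact absurd (h''.trans h') hc23
    have he23 : e23 = c2 := by
      rcases K11 with h' | h' | h'
      · exact absurd (h'.trans h.symm) hc12
      · rcases K3e with h'' | h'' | h''
        · exact absurd h'' hc23
        · exact h''.symm
        · exact absurd (h'.trans h''.symm) hc13
      · exact h'.symm.trans h.symm
    have hd23 : d23 = c2 := by
      rcases K6 with h' | h' | h'
      · exact h'.trans he23
      · rcases K3 with h'' | h'' | h''
        · exact absurd h'' hc23
        · exact absurd (h''.trans h').symm hc12
        · exact absurd (h''.trans h').symm hc13
      · exact absurd (he23.symm.trans h').symm hc12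
    have hd13 : d13 = c3 := by
      rcases K9 with h' | h' | h'
      · exact h'.symm
      · exact absurd (h'.trans he12).symm hc23
      · have hd : d13 = c2 := h'.trans he12
        rcases K2 with h'' | h'' | h''
        · exact absurd h'' hc13
        · exact absurd (h''.trans hd) hc12
        · exact absurd (h''.trans hd).symm hc23
    rcases K10 with h' | h' | h'
    · exact hc13 (h'.trans hd13)
    · exact hc12 (h'.trans he23)
    · exact hc23 ((hd13.symm.trans h').trans he23).symm

/-- A rainbow cancellative coloring contains no rainbow copy of `S_{p-1,3}^{(p)}`:
there is no `(p-1)`-set `X` and three distinct vertices outside `X` such that the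
three edges `X ∪ {x_i}` receive pairwise distinct colors. -/
theorem no_rainbow_S (n p : ℕ) (hp : 3 ≤ p) (hn : p ≤ n)
    (col : Finset (Fin n) → ℕ) (hc : RainbowCancellative n p col) :
    ¬ ∃ (X : Finset (Fin n)) (x1 x2 x3 : Fin n),
      X.card = p - 1 ∧ x1 ∉ X ∧ x2 ∉ X ∧ x3 ∉ X ∧
      x1 ≠ x2 ∧ x1 ≠ x3 ∧ x2 ≠ x3 ∧
      col (insert x1 X) ≠ col (insert x2 X) ∧
      col (insert x1 X) ≠ col (insert x3 X) ∧
      col (insert x2 X) ≠ col (insert x3 X) := by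
  rintro ⟨X, x1, x2, x3, hX, h1, h2, h3, h12, h13, h23, hc12, hc13, hc23⟩
  have hX2 : 1 < X.card := by omega
  obtain ⟨y, hy, z, hz, hyz⟩ := Finset.one_lt_card.mp hX2
  -- cardinalities
  have cardI : ∀ a : Fin n, a ∉ X → (insert a X).card = p := by
    intro a ha
    rw [Finset.card_insert_of_notMem ha, hX]
    omega
  have cardD : ∀ a b w : Fin n, a ∉ X → b ∉ X → a ≠ b → w ∈ X →
      (insert a (insert b (X.erase w))).card = p := by
    intro a b w ha hb hab hw
    have hb' : b ∉ X.erase w := fun h => hb (Finset.mem_of_mem_erase h)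
    have ha' : a ∉ insert b (X.erase w) := by
      simp only [Finset.mem_insert, Finset.mem_erase, not_or, not_and]
      exact ⟨hab, fun _ h => ha h⟩
    rw [Finset.card_insert_of_notMem ha', Finset.card_insert_of_notMem hb',
      Finset.card_erase_of_mem hw, hX]
    omega
  -- the key consequence of rainbow cancellativity
  have key : ∀ S T U : Finset (Fin n), S.card = p → T.card = p → U.card = p →
      (S \ T) ∪ (T \ S) ⊆ U → col S = col T ∨ col S = col U ∨ col T = col U := by
    intro S T U hS hT hU hsub
    by_contra h
    push_neg at h
    exact hc S T U hS hT hU h.1 h.2.1 h.2.2 hsub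
  -- abbreviations for cards
  have cA := cardI x1 h1
  have cB := cardI x2 h2
  have cC := cardI x3 h3
  have cD12 := cardD x1 x2 y h1 h2 h12 hy
  have cD13 := cardD x1 x3 y h1 h3 h13 hy
  have cD23 := cardD x2 x3 y h2 h3 h23 hy
  have cE12 := cardD x1 x2 z h1 h2 h12 hz
  have cE13 := cardD x1 x3 z h1 h3 h13 hz
  have cE23 := cardD x2 x3 z h2 h3 h23 hz
  -- membership of pairs in target edges
  have pairYZ : ∀ a : Fin n, a ∉ X → ({y, z} : Finset (Fin n)) ⊆ insert a X := by
    intro a ha t ht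
    simp only [Finset.mem_insert, Finset.mem_singleton] at ht ⊢
    rcases ht with rfl | rfl
    · exact Or.inr hy
    · exact Or.inr hz
  have pairD : ∀ u v w w' : Fin n, w ∈ X → w ≠ w' →
      ({w, u} : Finset (Fin n)) ⊆ insert u (insert v (X.erase w')) := by
    intro u v w w' hw hww' t ht
    simp only [Finset.mem_insert, Finset.mem_singleton, Finset.mem_erase] at ht ⊢
    rcases ht with rfl | rfl
    · exact Or.inr (Or.inr ⟨hww', hw⟩)
    · exact Or.inl rfl
  have pairD' : ∀ u v w w' : Fin n, w ∈ X → w ≠ w' →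
      ({w, v} : Finset (Fin n)) ⊆ insert u (insert v (X.erase w')) := by
    intro u v w w' hw hww' t ht
    simp only [Finset.mem_insert, Finset.mem_singleton, Finset.mem_erase] at ht ⊢
    rcases ht with rfl | rfl
    · exact Or.inr (Or.inr ⟨hww', hw⟩)
    · exact Or.inr (Or.inl rfl)
  have pairXX : ∀ u v w : Fin n, ({u, v} : Finset (Fin n)) ⊆
      insert u (insert v (X.erase w)) := by
    intro u v w t ht
    simp only [Finset.mem_insert, Finset.mem_singleton, Finset.mem_erase] at ht ⊢
    tauto
  -- the fifteen constraints
  have K1 := key (insert x1 X) (insert x2 X) (insert x1 (insert x2 (X.erase y)))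
    cA cB cD12 (sdP1.trans (pairXX x1 x2 y))
  have K2 := key (insert x1 X) (insert x3 X) (insert x1 (insert x3 (X.erase y)))
    cA cC cD13 (sdP1.trans (pairXX x1 x3 y))
  have K3 := key (insert x2 X) (insert x3 X) (insert x2 (insert x3 (X.erase y)))
    cB cC cD23 (sdP1.trans (pairXX x2 x3 y))
  have K1e := key (insert x1 X) (insert x2 X) (insert x1 (insert x2 (X.erase z)))
    cA cB cE12 (sdP1.trans (pairXX x1 x2 z))
  have K2e := key (insert x1 X) (insert x3 X) (insert x1 (insert x3 (X.erase z)))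
    cA cC cE13 (sdP1.trans (pairXX x1 x3 z))
  have K3e := key (insert x2 X) (insert x3 X) (insert x2 (insert x3 (X.erase z)))
    cB cC cE23 (sdP1.trans (pairXX x2 x3 z))
  -- D_ij vs E_ij : symmetric difference {y,z} ⊆ X ∪ {x_k}
  have K4 := key (insert x1 (insert x2 (X.erase y))) (insert x1 (insert x2 (X.erase z)))
    (insert x3 X) cD12 cE12 cC (sdP2.trans (pairYZ x3 h3))
  have K5 := key (insert x1 (insert x3 (X.erase y))) (insert x1 (insert x3 (X.erase z)))
    (insert x2 X) cD13 cE13 cB (sdP2.trans (pairYZ x2 h2))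
  have K6 := key (insert x2 (insert x3 (X.erase y))) (insert x2 (insert x3 (X.erase z)))
    (insert x1 X) cD23 cE23 cA (sdP2.trans (pairYZ x1 h1))
  -- cross constraints
  -- C vs D23 : sym diff {y, x2} ⊆ E12
  have K7 := key (insert x3 X) (insert x2 (insert x3 (X.erase y)))
    (insert x1 (insert x2 (X.erase z))) cC cD23 cE12
    (sdP3.trans (pairD' x1 x2 y z hy hyz))
  -- B vs D23 : sym diff {y, x3} ⊆ E13
  have K8 := key (insert x2 X) (insert x2 (insert x3 (X.erase y)))
    (insert x1 (insert x3 (X.erase z))) cB cD23 cE13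
    (sdP3'.trans (pairD' x1 x3 y z hy hyz))
  -- C vs D13 : sym diff {y, x1} ⊆ E12
  have K9 := key (insert x3 X) (insert x1 (insert x3 (X.erase y)))
    (insert x1 (insert x2 (X.erase z))) cC cD13 cE12
    (sdP3.trans (pairD x1 x2 y z hy hyz))
  -- A vs D13 : sym diff {y, x3} ⊆ E23
  have K10 := key (insert x1 X) (insert x1 (insert x3 (X.erase y)))
    (insert x2 (insert x3 (X.erase z))) cA cD13 cE23
    (sdP3'.trans (pairD' x2 x3 y z hy hyz))
  -- A vs D12 : sym diff {y, x2} ⊆ E23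
  have K11 := key (insert x1 X) (insert x1 (insert x2 (X.erase y)))
    (insert x2 (insert x3 (X.erase z))) cA cD12 cE23
    (sdP3'.trans (pairD x2 x3 y z hy hyz))
  -- B vs D12 : sym diff {y, x1} ⊆ E13
  have K12 := key (insert x2 X) (insert x1 (insert x2 (X.erase y)))
    (insert x1 (insert x3 (X.erase z))) cB cD12 cE13
    (sdP3.trans (pairD x1 x3 y z hy hyz))
  exact colors_contra _ _ _ _ _ _ _ _ _ hc12 hc13 hc23 K1 K2 K3 K1e K2e K3e K4 K5 K6
    K7 K8 K9 K10 K11 K12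
end

section
/- Let n ≥ 5 be an integer and let c be an edge-coloring of K_n^(3). Then c is rainbow F5-free if and only if c is both rainbow H1-free and rainbow H2-free, where a copy of H1 consists of five distinct vertices a, b, c, d, e with triples abc, abd, abe, and a copy of H2 consists of five distinct vertices a, b, c, d, e with triples abc, bcd, cde. -/
/-- Rainbow `H1`-free: no five distinct vertices `a b c d e` such that the triples
`abc, abd, abe` receive pairwise distinct colors. -/
def RainbowH1Free (n : ℕ) (col : Finset (Fin n) → ℕ) : Prop :=
  ∀ a b c d e : Fin n,
    a ≠ b → a ≠ c → a ≠ d → a ≠ e → b ≠ c → b ≠ d → b ≠ e → c ≠ d → c ≠ e → d ≠ e →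
    ¬ (col {a, b, c} ≠ col {a, b, d} ∧ col {a, b, c} ≠ col {a, b, e} ∧
       col {a, b, d} ≠ col {a, b, e})

/-- Rainbow `H2`-free: no five distinct vertices `a b c d e` such that the triples
`abc, bcd, cde` receive pairwise distinct colors. -/
def RainbowH2Free (n : ℕ) (col : Finset (Fin n) → ℕ) : Prop :=
  ∀ a b c d e : Fin n,
    a ≠ b → a ≠ c → a ≠ d → a ≠ e → b ≠ c → b ≠ d → b ≠ e → c ≠ d → c ≠ e → d ≠ e →
    ¬ (col {a, b, c} ≠ col {b, c, d} ∧ col {a, b, c} ≠ col {c, d, e} ∧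
       col {b, c, d} ≠ col {c, d, e})

/-- Arithmetic core for the H1 direction. -/
lemma f5_arith1 (x y z c0 : ℕ) (h1 : x ≠ y) (h2 : x ≠ z) (h3 : y ≠ z)
    (A : x = c0 ∨ y = c0) (B : x = c0 ∨ z = c0) (C : y = c0 ∨ z = c0) : False := by
  rcases A with hA | hA <;> rcases B with hB | hB <;> rcases C with hC | hC <;> omega

/-- Arithmetic core for the H2 direction. -/
lemma f5_arith2 (p q r s t : ℕ) (h1 : p ≠ q) (h2 : p ≠ r) (h3 : q ≠ r)
    (I1 : q = s ∨ r = s) (I2 : p = t ∨ q = t) (I3 : p = s ∨ s = r)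
    (I4 : t = s ∨ t = q ∨ s = q) (I5 : t = r ∨ t = p) : False := by
  rcases I1 with hA | hA <;> rcases I2 with hB | hB <;> rcases I3 with hC | hC <;>
    rcases I4 with hD | hD | hD <;> rcases I5 with hE | hE <;> omega

/-- Arithmetic core for the converse direction. -/
lemma f5_arith3 (p q r s t u : ℕ) (h1 : p ≠ q) (h2 : p ≠ r) (h3 : q ≠ r)
    (HH : p = s ∨ q = s) (J1 : s = t ∨ s = r ∨ t = r) (J2 : p = t ∨ q = t)
    (J3 : r = t ∨ t = q) (K1 : s = u ∨ s = r ∨ u = r) (K2 : q = u ∨ p = u)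
    (K3 : r = u ∨ u = p) : False := by
  rcases HH with hA | hA <;> rcases J1 with hB | hB | hB <;> rcases J2 with hC | hC <;>
    rcases J3 with hD | hD <;> rcases K1 with hE | hE | hE <;> rcases K2 with hF | hF <;>
    rcases K3 with hG | hG <;> omega

/-- Swapping the first two elements of a triple finset. -/
lemma tri_swap12 {α : Type*} [DecidableEq α] (x y z : α) :
    ({y, x, z} : Finset α) = {x, y, z} := by ext w; simp; tauto

/-- Swapping the last two elements of a triple finset. -/
lemma tri_swap23 {α : Type*} [DecidableEq α] (x y z : α) :
    ({x, z, y} : Finset α) = {x, y, z} := by ext w; simp; tauto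

/-- Swapping the outer two elements of a triple finset. -/
lemma tri_swap13 {α : Type*} [DecidableEq α] (x y z : α) :
    ({z, y, x} : Finset α) = {x, y, z} := by ext w; simp; tauto

/-- Rotating a triple finset. -/
lemma tri_rot1 {α : Type*} [DecidableEq α] (x y z : α) :
    ({y, z, x} : Finset α) = {x, y, z} := by ext w; simp; tauto

/-- Rotating a triple finset the other way. -/
lemma tri_rot2 {α : Type*} [DecidableEq α] (x y z : α) :
    ({z, x, y} : Finset α) = {x, y, z} := by ext w; simp; tauto

set_option maxHeartbeats 1000000 in
/-- For `n ≥ 5`, an edge-coloring of `K_n^(3)` is rainbow `F5`-free if and only if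
it is both rainbow `H1`-free and rainbow `H2`-free. -/
theorem rainbowF5Free_iff (n : ℕ) (hn : 5 ≤ n) (col : Finset (Fin n) → ℕ) :
    RainbowF5Free n col ↔ RainbowH1Free n col ∧ RainbowH2Free n col := by
  constructor
  · intro h
    constructor
    · intro a b c d e hab hac had hae hbc hbd hbe hcd hce hde hrb
      obtain ⟨h1, h2, h3⟩ := hrb
      have hed : e ≠ d := hde.symm
      have hdc : d ≠ c := hcd.symm
      have hec : e ≠ c := hce.symm
      have A := h a b c d e hab hac had hae hbc hbd hbe hcd hce hde
      have B := h a b c e d hab hac hae had hbc hbe hbd hce hcd hed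
      have C := h a b d e c hab had hae hac hbd hbe hbc hde hdc hec
      rw [tri_swap23 c d e] at B
      rw [tri_rot1 c d e] at C
      have A' : col {a, b, c} = col {c, d, e} ∨ col {a, b, d} = col {c, d, e} := by
        by_contra hc'; push_neg at hc'; exact A ⟨h1, hc'.1, hc'.2⟩
      have B' : col {a, b, c} = col {c, d, e} ∨ col {a, b, e} = col {c, d, e} := by
        by_contra hc'; push_neg at hc'; exact B ⟨h2, hc'.1, hc'.2⟩
      have C' : col {a, b, d} = col {c, d, e} ∨ col {a, b, e} = col {c, d, e} := by
        by_contra hc'; push_neg at hc'; exact C ⟨h3, hc'.1, hc'.2⟩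
      exact f5_arith1 _ _ _ _ h1 h2 h3 A' B' C'
    · intro a b c d e hab hac had hae hbc hbd hbe hcd hce hde hrb
      obtain ⟨h1, h2, h3⟩ := hrb
      have hba := hab.symm; have hca := hac.symm; have hda := had.symm
      have hea := hae.symm; have hcb := hbc.symm; have hdb := hbd.symm
      have heb := hbe.symm; have hdc := hcd.symm; have hec := hce.symm
      have hed := hde.symm
      have I1 := h c d b e a hcd hcb hce hca hdb hde hda hbe hba hea
      have I2 := h b c a d e hbc hba hbd hbe hca hcd hce had hae hde
      have I3 := h a b c e d hab hac hae had hbc hbe hbd hce hcd hed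
      have I4 := h a e d b c hae had hab hac hed heb hec hdb hdc hbc
      have I5 := h d e a c b hde hda hdc hdb hea hec heb hac hab hcb
      rw [tri_rot1 b c d, tri_rot1 a b e] at I1
      rw [tri_rot1 a b c] at I2
      rw [tri_swap23 c d e] at I3
      rw [tri_swap23 a d e, tri_swap23 a b e, tri_rot2 b c d] at I4
      rw [tri_rot1 a d e, tri_rot1 c d e, tri_swap23 a b c] at I5
      have I1' : col {b, c, d} = col {a, b, e} ∨ col {c, d, e} = col {a, b, e} := by
        by_contra hc'; push_neg at hc'; exact I1 ⟨h3, hc'.1, hc'.2⟩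
      have I2' : col {a, b, c} = col {a, d, e} ∨ col {b, c, d} = col {a, d, e} := by
        by_contra hc'; push_neg at hc'; exact I2 ⟨h1, hc'.1, hc'.2⟩
      have I3' : col {a, b, c} = col {a, b, e} ∨ col {a, b, e} = col {c, d, e} := by
        by_contra hc'; push_neg at hc'; exact I3 ⟨hc'.1, h2, hc'.2⟩
      have I4' : col {a, d, e} = col {a, b, e} ∨ col {a, d, e} = col {b, c, d} ∨
          col {a, b, e} = col {b, c, d} := by
        by_contra hc'; push_neg at hc'; exact I4 ⟨hc'.1, hc'.2.1, hc'.2.2⟩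
      have I5' : col {a, d, e} = col {c, d, e} ∨ col {a, d, e} = col {a, b, c} := by
        by_contra hc'; push_neg at hc'
        exact I5 ⟨hc'.1, hc'.2, fun hh => h2 hh.symm⟩
      exact f5_arith2 _ _ _ _ _ h1 h2 h3 I1' I2' I3' I4' I5'
  · rintro ⟨hH1, hH2⟩
    intro a b c d e hab hac had hae hbc hbd hbe hcd hce hde hrb
    obtain ⟨h1, h2, h3⟩ := hrb
    have hba := hab.symm; have hca := hac.symm; have hda := had.symm
    have hea := hae.symm; have hcb := hbc.symm; have hdb := hbd.symm
    have heb := hbe.symm; have hdc := hcd.symm; have hec := hce.symm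
    have hed := hde.symm
    have HH1 := hH1 a b c d e hab hac had hae hbc hbd hbe hcd hce hde
    have J1 := hH2 b a e d c hba hbe hbd hbc hae had hac hed hec hdc
    have J2 := hH2 c b a d e hcb hca hcd hce hba hbd hbe had hae hde
    have J3 := hH2 c e d a b hce hcd hca hcb hed hea heb hda hdb hab
    have K1 := hH2 b a e c d hba hbe hbc hbd hae hac had hec hed hcd
    have K2 := hH2 d b a c e hdb hda hdc hde hba hbc hbe hac hae hce
    have K3 := hH2 d e c a b hde hdc hda hdb hec hea heb hca hcb hab
    rw [tri_swap12 a b e, tri_swap23 a d e, tri_swap13 c d e] at J1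
    rw [tri_swap13 a b c, tri_swap12 a b d] at J2
    rw [tri_swap23 c d e, tri_swap13 a d e, tri_rot2 a b d] at J3
    rw [tri_swap12 a b e, tri_swap23 a c e, tri_rot2 c d e] at K1
    rw [tri_swap13 a b d, tri_swap12 a b c] at K2
    rw [tri_rot1 c d e, tri_swap13 a c e, tri_rot2 a b c] at K3
    have HH1' : col {a, b, c} = col {a, b, e} ∨ col {a, b, d} = col {a, b, e} := by
      by_contra hc'; push_neg at hc'; exact HH1 ⟨h1, hc'.1, hc'.2⟩
    have J1' : col {a, b, e} = col {a, d, e} ∨ col {a, b, e} = col {c, d, e} ∨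
        col {a, d, e} = col {c, d, e} := by
      by_contra hc'; push_neg at hc'; exact J1 ⟨hc'.1, hc'.2.1, hc'.2.2⟩
    have J2' : col {a, b, c} = col {a, d, e} ∨ col {a, b, d} = col {a, d, e} := by
      by_contra hc'; push_neg at hc'; exact J2 ⟨h1, hc'.1, hc'.2⟩
    have J3' : col {c, d, e} = col {a, d, e} ∨ col {a, d, e} = col {a, b, d} := by
      by_contra hc'; push_neg at hc'
      exact J3 ⟨hc'.1, fun hh => h3 hh.symm, hc'.2⟩
    have K1' : col {a, b, e} = col {a, c, e} ∨ col {a, b, e} = col {c, d, e} ∨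
        col {a, c, e} = col {c, d, e} := by
      by_contra hc'; push_neg at hc'; exact K1 ⟨hc'.1, hc'.2.1, hc'.2.2⟩
    have K2' : col {a, b, d} = col {a, c, e} ∨ col {a, b, c} = col {a, c, e} := by
      by_contra hc'; push_neg at hc'
      exact K2 ⟨fun hh => h1 hh.symm, hc'.1, hc'.2⟩
    have K3' : col {c, d, e} = col {a, c, e} ∨ col {a, c, e} = col {a, b, c} := by
      by_contra hc'; push_neg at hc'
      exact K3 ⟨hc'.1, fun hh => h2 hh.symm, hc'.2⟩
    exact f5_arith3 _ _ _ _ _ _ h1 h2 h3 HH1' J1' J2' J3' K1' K2' K3'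
end

section
/- Let n ≥ 5 be an integer and let c be a rainbow F5-free edge-coloring of K_n^(3). If x1, x2, x3, x4, x5 are five distinct vertices such that the three triples x1x2x3, x2x3x4, x3x4x5 receive pairwise distinct colors, then c(x4x5x1) = c(x1x2x3). -/
/-- In a rainbow `F5`-free coloring of `K_n^(3)` (`n ≥ 5`), if the triples
`x1x2x3, x2x3x4, x3x4x5` on five distinct vertices receive pairwise distinct
colors, then `c(x4x5x1) = c(x1x2x3)`. -/
theorem five_cycle_color (n : ℕ) (hn : 5 ≤ n) (col : Finset (Fin n) → ℕ)
    (h : RainbowF5Free n col)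
    (x1 x2 x3 x4 x5 : Fin n)
    (h12 : x1 ≠ x2) (h13 : x1 ≠ x3) (h14 : x1 ≠ x4) (h15 : x1 ≠ x5)
    (h23 : x2 ≠ x3) (h24 : x2 ≠ x4) (h25 : x2 ≠ x5)
    (h34 : x3 ≠ x4) (h35 : x3 ≠ x5) (h45 : x4 ≠ x5)
    (hc12 : col {x1, x2, x3} ≠ col {x2, x3, x4})
    (hc13 : col {x1, x2, x3} ≠ col {x3, x4, x5})
    (hc23 : col {x2, x3, x4} ≠ col {x3, x4, x5}) :
    col {x4, x5, x1} = col {x1, x2, x3} := by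
  have e1 : ({x2, x3, x1} : Finset (Fin n)) = {x1, x2, x3} := by
    ext a; simp; tauto
  have e2 : ({x1, x4, x5} : Finset (Fin n)) = {x4, x5, x1} := by
    ext a; simp; tauto
  have e3 : ({x4, x5, x3} : Finset (Fin n)) = {x3, x4, x5} := by
    ext a; simp; tauto
  have e4 : ({x3, x1, x2} : Finset (Fin n)) = {x1, x2, x3} := by
    ext a; simp; tauto
  have h1 := h x2 x3 x1 x4 x5 h23 (Ne.symm h12) h24 h25 (Ne.symm h13) h34 h35 h14 h15 h45
  rw [e1, e2] at h1
  have h2 := h x4 x5 x3 x1 x2 h45 (Ne.symm h34) (Ne.symm h14) (Ne.symm h24)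
    (Ne.symm h35) (Ne.symm h15) (Ne.symm h25) (Ne.symm h13) (Ne.symm h23) h12
  rw [e3, e4] at h2
  push_neg at h1 h2
  by_cases hq : col {x1, x2, x3} = col {x4, x5, x1}
  · exact hq.symm
  · have h24' := h1 hc12 hq
    have : col {x3, x4, x5} = col {x4, x5, x1} ∨ col {x4, x5, x1} = col {x1, x2, x3} := by
      by_cases hr : col {x3, x4, x5} = col {x4, x5, x1}
      · exact Or.inl hr
      · exact Or.inr (h2 hr (Ne.symm hc13))
    rcases this with hr | hr
    · exact absurd (h24'.trans hr.symm) hc23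
    · exact hr
end

section
/- Let p ≥ 3 and n ≥ p + 1 be integers, and let c be a rainbow cancellative edge-coloring of K_n^(p). Let X be a (p−1)-element vertex set and let α1 ≠ α2 be two colors such that for every vertex v outside X the edge X ∪ {v} has color α1 or α2, and both colors α1, α2 occur among these edges. Then every edge f with f ∩ X ≠ ∅ satisfies c(f) ∈ {α1, α2}. -/
set_option maxHeartbeats 1000000


/-- Auxiliary contradiction lemma for Claim 3.3. -/
lemma rc_aux {n p : ℕ} {col : Finset (Fin n) → ℕ} (hc : RainbowCancellative n p col)
    {X : Finset (Fin n)} (hX : X.card = p - 1)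
    {α β : ℕ} (hαβ : α ≠ β)
    {f : Finset (Fin n)} (hf : f.card = p)
    {x y z w : Fin n}
    (hxf : x ∈ f) (hxX : x ∈ X)
    (hyX : y ∈ X) (hyf : y ∉ f)
    (hzf : z ∈ f) (hzX : z ∉ X)
    (hwX : w ∉ X) (hwf : w ∉ f)
    (hcz : col (insert z X) = α)
    (hcw : col (insert w X) = β)
    (hh : col (insert y (f.erase z)) = α ∨ col (insert y (f.erase z)) = β)
    (hfα : col f ≠ α) (hfβ : col f ≠ β) : False := by
  classical
  have hp2 : 2 ≤ p := by
    have h1 : 1 ≤ X.card := Finset.card_pos.mpr ⟨x, hxX⟩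
    omega
  have hzw : z ≠ w := by
    rintro rfl
    exact hαβ (hcz.symm.trans hcw)
  have hyx : y ≠ x := fun e => hyf (e ▸ hxf)
  have hxz : x ≠ z := fun e => hzX (e ▸ hxX)
  have hxw : x ≠ w := fun e => hwX (e ▸ hxX)
  have hyz : y ≠ z := fun e => hyf (e ▸ hzf)
  have hyw : y ≠ w := fun e => hwX (e ▸ hyX)
  set A := insert z X with hA
  set B := insert w X with hB
  set D := insert z (insert w (X.erase x)) with hD
  set h := insert y (f.erase z) with hhdef
  have cardA : A.card = p := by
    rw [hA, Finset.card_insert_of_notMem hzX, hX]; omega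
  have cardB : B.card = p := by
    rw [hB, Finset.card_insert_of_notMem hwX, hX]; omega
  have cardD : D.card = p := by
    have hwe : w ∉ X.erase x := fun hm => hwX (Finset.mem_of_mem_erase hm)
    have hze : z ∉ insert w (X.erase x) := by
      simp only [Finset.mem_insert]
      rintro (rfl | hm)
      · exact hzw rfl
      · exact hzX (Finset.mem_of_mem_erase hm)
    rw [hD, Finset.card_insert_of_notMem hze, Finset.card_insert_of_notMem hwe,
      Finset.card_erase_of_mem hxX, hX]
    omega
  have cardh : h.card = p := by
    have hye : y ∉ f.erase z := fun hm => hyf (Finset.mem_of_mem_erase hm)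
    rw [hhdef, Finset.card_insert_of_notMem hye, Finset.card_erase_of_mem hzf, hf]
    omega
  -- D gets color α or β
  have hDc : col D = α ∨ col D = β := by
    by_contra hcontra
    push_neg at hcontra
    refine hc A B D cardA cardB cardD (by rw [hcz, hcw]; exact hαβ)
      (by rw [hcz]; exact fun e => hcontra.1 e.symm)
      (by rw [hcw]; exact fun e => hcontra.2 e.symm) ?_
    intro u hu
    simp only [hA, hB, hD, Finset.mem_union, Finset.mem_sdiff, Finset.mem_insert,
      Finset.mem_erase] at hu ⊢
    tauto
  rcases hDc with hDα | hDβ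
  · -- col D = α : triple (D, B, f), symmetric difference {z, x} ⊆ f
    refine hc D B f cardD cardB hf (by rw [hDα, hcw]; exact hαβ)
      (by rw [hDα]; exact fun e => hfα e.symm)
      (by rw [hcw]; exact fun e => hfβ e.symm) ?_
    intro u hu
    simp only [hB, hD, Finset.mem_union, Finset.mem_sdiff, Finset.mem_insert,
      Finset.mem_erase] at hu
    have : u = z ∨ u = x := by tauto
    rcases this with rfl | rfl <;> assumption
  · rcases hh with hhα | hhβ
    · -- col h = α : triple (f, h, D), symmetric difference {z, y} ⊆ D
      refine hc f h D hf cardh cardD (by rw [hhα]; exact hfα)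
        (by rw [hDβ]; exact hfβ)
        (by rw [hhα, hDβ]; exact hαβ) ?_
      intro u hu
      simp only [hhdef, Finset.mem_union, Finset.mem_sdiff, Finset.mem_insert,
        Finset.mem_erase] at hu
      have : u = z ∨ u = y := by tauto
      simp only [hD, Finset.mem_insert, Finset.mem_erase]
      rcases this with rfl | rfl
      · exact Or.inl rfl
      · exact Or.inr (Or.inr ⟨hyx, hyX⟩)
    · -- col h = β : triple (f, h, A), symmetric difference {z, y} ⊆ A
      refine hc f h A hf cardh cardA (by rw [hhβ]; exact hfβ)
        (by rw [hcz]; exact hfα)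
        (by rw [hhβ, hcz]; exact fun e => hαβ e.symm) ?_
      intro u hu
      simp only [hhdef, Finset.mem_union, Finset.mem_sdiff, Finset.mem_insert,
        Finset.mem_erase] at hu
      have : u = z ∨ u = y := by tauto
      simp only [hA, Finset.mem_insert]
      rcases this with rfl | rfl
      · exact Or.inl rfl
      · exact Or.inr hyX

/-- Claim 3.3: in a rainbow cancellative coloring, if every edge `X ∪ {v}` over
a fixed `(p-1)`-set `X` is colored `α1` or `α2` (both occurring), then every
edge meeting `X` is colored `α1` or `α2`. -/
theorem meets_core_two_colors (n p : ℕ) (hp : 3 ≤ p) (hn : p + 1 ≤ n)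
    (col : Finset (Fin n) → ℕ) (hc : RainbowCancellative n p col)
    (X : Finset (Fin n)) (hX : X.card = p - 1)
    (α1 α2 : ℕ) (hα : α1 ≠ α2)
    (hall : ∀ v : Fin n, v ∉ X → col (insert v X) = α1 ∨ col (insert v X) = α2)
    (h1 : ∃ v : Fin n, v ∉ X ∧ col (insert v X) = α1)
    (h2 : ∃ v : Fin n, v ∉ X ∧ col (insert v X) = α2)
    (f : Finset (Fin n)) (hf : f.card = p) (hfX : (f ∩ X).Nonempty) :
    col f = α1 ∨ col f = α2 := by
  classical
  suffices H : ∀ m : ℕ, ∀ f : Finset (Fin n), (f \ X).card ≤ m → f.card = p →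
      (f ∩ X).Nonempty → col f = α1 ∨ col f = α2 by
    exact H (f \ X).card f le_rfl hf hfX
  intro m
  induction m with
  | zero =>
    intro f hm hfp hfX'
    exfalso
    have hsub : f ⊆ X := Finset.sdiff_eq_empty_iff_subset.mp
      (Finset.card_eq_zero.mp (Nat.le_zero.mp hm))
    have := Finset.card_le_card hsub
    omega
  | succ m IH =>
    intro f hm hfp hfX'
    have hfXne : (f \ X).Nonempty := by
      rw [Finset.sdiff_nonempty]
      intro hsub
      have := Finset.card_le_card hsub
      omega
    by_cases hXf : X ⊆ f
    · -- f = insert v X for the unique v ∈ f \ X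
      obtain ⟨v, hv⟩ := hfXne
      rw [Finset.mem_sdiff] at hv
      have hsub : insert v X ⊆ f := Finset.insert_subset hv.1 hXf
      have hcard : f.card ≤ (insert v X).card := by
        rw [Finset.card_insert_of_notMem hv.2, hX]
        omega
      have hfeq : f = insert v X := (Finset.eq_of_subset_of_card_le hsub hcard).symm
      rw [hfeq]
      exact hall v hv.2
    · -- main inductive step
      obtain ⟨y, hyX, hyf⟩ : ∃ y, y ∈ X ∧ y ∉ f := by
        by_contra hcon
        push_neg at hcon
        exact hXf hcon
      obtain ⟨x, hx⟩ := hfX'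
      rw [Finset.mem_inter] at hx
      obtain ⟨z, hz⟩ := hfXne
      rw [Finset.mem_sdiff] at hz
      by_contra hcon
      push_neg at hcon
      obtain ⟨hf1, hf2⟩ := hcon
      -- the swapped edge h = insert y (f.erase z)
      have hhsub : (insert y (f.erase z)) \ X ⊆ (f \ X).erase z := by
        intro u hu
        simp only [Finset.mem_sdiff, Finset.mem_insert, Finset.mem_erase] at hu ⊢
        rcases hu.1 with rfl | ⟨huz, huf⟩
        · exact absurd hyX hu.2
        · exact ⟨huz, huf, hu.2⟩
      have hhcard : ((insert y (f.erase z)) \ X).card ≤ m := by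
        have h1' := Finset.card_le_card hhsub
        have h2' : ((f \ X).erase z).card = (f \ X).card - 1 :=
          Finset.card_erase_of_mem (Finset.mem_sdiff.mpr ⟨hz.1, hz.2⟩)
        have h3' : 1 ≤ (f \ X).card := Finset.card_pos.mpr ⟨z, Finset.mem_sdiff.mpr hz⟩
        omega
      have hhp : (insert y (f.erase z)).card = p := by
        have hye : y ∉ f.erase z := fun hm' => hyf (Finset.mem_of_mem_erase hm')
        rw [Finset.card_insert_of_notMem hye, Finset.card_erase_of_mem hz.1, hfp]
        omega
      have hhX : ((insert y (f.erase z)) ∩ X).Nonempty :=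
        ⟨y, Finset.mem_inter.mpr ⟨Finset.mem_insert_self _ _, hyX⟩⟩
      have hhcol := IH (insert y (f.erase z)) hhcard hhp hhX
      -- direct contradiction if the opposite-color witness w lies in f
      have key : ∀ w : Fin n, w ∉ X → w ∈ f →
          col (insert z X) ≠ col (insert w X) → False := by
        intro w hwX hwf hne
        have hzw : z ≠ w := by rintro rfl; exact hne rfl
        have cardA : (insert z X).card = p := by
          rw [Finset.card_insert_of_notMem hz.2, hX]; omega
        have cardB : (insert w X).card = p := by
          rw [Finset.card_insert_of_notMem hwX, hX]; omega
        have hcolz := hall z hz.2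
        have hcolw := hall w hwX
        refine hc (insert z X) (insert w X) f cardA cardB hfp hne ?_ ?_ ?_
        · rcases hcolz with h' | h' <;> rw [h'] <;>
            [exact fun e => hf1 e.symm; exact fun e => hf2 e.symm]
        · rcases hcolw with h' | h' <;> rw [h'] <;>
            [exact fun e => hf1 e.symm; exact fun e => hf2 e.symm]
        · intro u hu
          simp only [Finset.mem_union, Finset.mem_sdiff, Finset.mem_insert] at hu
          have : u = z ∨ u = w := by tauto
          rcases this with rfl | rfl <;> [exact hz.1; exact hwf]
      rcases hall z hz.2 with hcz | hcz
      · -- col (X ∪ z) = α1, take w with color α2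
        obtain ⟨w, hwX, hcw⟩ := h2
        by_cases hwf : w ∈ f
        · exact key w hwX hwf (by rw [hcz, hcw]; exact hα)
        · exact rc_aux hc hX hα hfp hx.1 hx.2 hyX hyf hz.1 hz.2 hwX hwf hcz hcw
            hhcol hf1 hf2
      · -- col (X ∪ z) = α2, take w with color α1
        obtain ⟨w, hwX, hcw⟩ := h1
        by_cases hwf : w ∈ f
        · exact key w hwX hwf (by rw [hcz, hcw]; exact hα.symm)
        · exact rc_aux hc hX hα.symm hfp hx.1 hx.2 hyX hyf hz.1 hz.2 hwX hwf hcz hcw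
            hhcol.symm hf2 hf1
end

section
/- Let p ≥ 3 and n ≥ p + 1 be integers, and let c be a rainbow cancellative edge-coloring of K_n^(p). Let X be a (p−1)-element vertex set and let α1 ≠ α2 be two colors such that for every vertex v outside X the edge X ∪ {v} has color α1 or α2, and both colors occur; for i = 1, 2 let A_i = {v ∉ X : c(X ∪ {v}) = α_i}. Then there do not exist two distinct edges f and g with f ∩ g ≠ ∅, each of f and g entirely contained in A_1 or entirely contained in A_2, such that c(f) ≠ c(g) and neither c(f) nor c(g) belongs to {α1, α2}. -/
set_option maxHeartbeats 1000000 in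
lemma factA (n p : ℕ) (hp : 3 ≤ p) (hn : p + 1 ≤ n)
    (col : Finset (Fin n) → ℕ) (hc : RainbowCancellative n p col)
    (X : Finset (Fin n)) (hX : X.card = p - 1)
    (β γ : ℕ) (hβγ : β ≠ γ)
    (B1 B2 : Finset (Fin n))
    (hB1 : ∀ v : Fin n, v ∈ B1 ↔ v ∉ X ∧ col (insert v X) = β)
    (hB2 : ∀ v : Fin n, v ∈ B2 ↔ v ∉ X ∧ col (insert v X) = γ)
    (w : Fin n) (hw : w ∈ B2) :
    ∀ E : Finset (Fin n), E.card = p → ∀ a, a ∈ E → a ∈ B1 → w ∈ E →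
      col E = β ∨ col E = γ := by
  have hwX : w ∉ X := ((hB2 w).1 hw).1
  have hwγ : col (insert w X) = γ := ((hB2 w).1 hw).2
  have hins : ∀ v : Fin n, v ∉ X → (insert v X).card = p := by
    intro v hv
    rw [Finset.card_insert_of_notMem hv, hX]; omega
  have hnotB1 : w ∉ B1 := by
    intro h
    exact hβγ (((hB1 w).1 h).2.symm.trans hwγ)
  intro E hE a haE haB1 hwE
  by_contra hcon
  push_neg at hcon
  have haX := ((hB1 a).1 haB1).1
  have haβ := ((hB1 a).1 haB1).2
  refine hc (insert a X) (insert w X) E (hins a haX) (hins w hwX) hE ?_ ?_ ?_ ?_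
  · rw [haβ, hwγ]; exact hβγ
  · rw [haβ]; exact fun h => hcon.1 h.symm
  · rw [hwγ]; exact fun h => hcon.2 h.symm
  · intro v hv
    simp only [Finset.mem_union, Finset.mem_sdiff, Finset.mem_insert] at hv
    rcases hv with ⟨h1, h2⟩ | ⟨h1, h2⟩
    · push_neg at h2
      rcases h1 with rfl | h1
      · exact haE
      · exact absurd h1 h2.2
    · push_neg at h2
      rcases h1 with rfl | h1
      · exact hwE
      · exact absurd h1 h2.2
  -- key: col (insert b (f.erase u)) = col f

set_option maxHeartbeats 1000000 in
lemma key (n p : ℕ) (hp : 3 ≤ p) (hn : p + 1 ≤ n)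
    (col : Finset (Fin n) → ℕ) (hc : RainbowCancellative n p col)
    (X : Finset (Fin n)) (hX : X.card = p - 1)
    (β γ : ℕ) (hβγ : β ≠ γ)
    (B1 B2 : Finset (Fin n))
    (hB1 : ∀ v : Fin n, v ∈ B1 ↔ v ∉ X ∧ col (insert v X) = β)
    (hB2 : ∀ v : Fin n, v ∈ B2 ↔ v ∉ X ∧ col (insert v X) = γ)
    (w : Fin n) (hw : w ∈ B2) :
    ∀ (f g : Finset (Fin n)) (u b : Fin n), f ⊆ B1 → g ⊆ B1 → f.card = p → g.card = p →
      col f ≠ β → col f ≠ γ → col g ≠ β → col g ≠ γ → col f ≠ col g →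
      u ∈ f → u ∈ g → b ∈ g → b ∉ f →
      col (insert b (f.erase u)) = col f := by
  have hwX : w ∉ X := ((hB2 w).1 hw).1
  have hwγ : col (insert w X) = γ := ((hB2 w).1 hw).2
  have hins : ∀ v : Fin n, v ∉ X → (insert v X).card = p := by
    intro v hv
    rw [Finset.card_insert_of_notMem hv, hX]; omega
  have hnotB1 : w ∉ B1 := by
    intro h
    exact hβγ (((hB1 w).1 h).2.symm.trans hwγ)
  have factA := factA n p hp hn col hc X hX β γ hβγ B1 B2 hB1 hB2 w hw
  intro f g u b hfB hgB hfc hgc hfβ hfγ hgβ hgγ hfg huf hug hbg hbf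
  have huB1 : u ∈ B1 := hfB huf
  have hbB1 : b ∈ B1 := hgB hbg
  have hwf : w ∉ f := fun h => hnotB1 (hfB h)
  have hbu : b ≠ u := fun h => hbf (h ▸ huf)
  have hbw : b ≠ w := fun h => hnotB1 (h ▸ hbB1)
  have huw : u ≠ w := fun h => hnotB1 (h ▸ huB1)
  have herase : (f.erase u).card = p - 1 := by
    rw [Finset.card_erase_of_mem huf, hfc]
  have hwerase : w ∉ f.erase u := fun h => hwf (Finset.mem_of_mem_erase h)
  have hhcard : (insert w (f.erase u)).card = p := by
    rw [Finset.card_insert_of_notMem hwerase, herase]; omega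
  have hcne : (f.erase u).Nonempty := by
    rw [← Finset.card_pos, herase]; omega
  obtain ⟨c, hcm⟩ := hcne
  have hcB1 : c ∈ B1 := hfB (Finset.mem_of_mem_erase hcm)
  have hhβγ : col (insert w (f.erase u)) = β ∨ col (insert w (f.erase u)) = γ :=
    factA _ hhcard c (Finset.mem_insert_of_mem hcm) hcB1 (Finset.mem_insert_self _ _)
  have hfh : col f ≠ col (insert w (f.erase u)) := by
    rcases hhβγ with h1 | h1 <;> rw [h1] <;> assumption
  have hsd : ∀ E : Finset (Fin n), u ∈ E → w ∈ E →
      (f \ insert w (f.erase u)) ∪ (insert w (f.erase u) \ f) ⊆ E := by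
    intro E huE hwE v hv
    simp only [Finset.mem_union, Finset.mem_sdiff, Finset.mem_insert,
      Finset.mem_erase] at hv
    rcases hv with ⟨h1, h2⟩ | ⟨h1, h2⟩
    · push_neg at h2
      by_cases hvu : v = u
      · rw [hvu]; exact huE
      · exact absurd h1 (h2.2 hvu)
    · rcases h1 with rfl | ⟨_, hvf⟩
      · exact hwE
      · exact absurd hvf h2
  have Huw : ∀ E : Finset (Fin n), E.card = p → u ∈ E → w ∈ E →
      col E = col f ∨ col E = col (insert w (f.erase u)) := by
    intro E hE huE hwE
    by_contra hcon
    push_neg at hcon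
    exact hc f (insert w (f.erase u)) E hfc hhcard hE hfh
      (fun h2 => hcon.1 h2.symm) (fun h2 => hcon.2 h2.symm) (hsd E huE hwE)
  have h3 : ({u, b, w} : Finset (Fin n)).card ≤ p := by
    have h31 : ({u, b, w} : Finset (Fin n)).card ≤ ({b, w} : Finset (Fin n)).card + 1 :=
      Finset.card_insert_le _ _
    have h32 : ({b, w} : Finset (Fin n)).card ≤ ({w} : Finset (Fin n)).card + 1 :=
      Finset.card_insert_le _ _
    have h33 : ({w} : Finset (Fin n)).card = 1 := Finset.card_singleton _
    omega
  have hpn : p ≤ Fintype.card (Fin n) := by rw [Fintype.card_fin]; omega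
  obtain ⟨E, hsubE, hEcard⟩ := Finset.exists_superset_card_eq (n := p) h3 hpn
  have huE : u ∈ E := hsubE (by simp)
  have hbE : b ∈ E := hsubE (by simp)
  have hwE : w ∈ E := hsubE (by simp)
  have hEh : col E = col (insert w (f.erase u)) := by
    rcases Huw E hEcard huE hwE with h1 | h1
    · exfalso
      rcases factA E hEcard u huE huB1 hwE with h2 | h2 <;> rw [h1] at h2
      · exact hfβ h2
      · exact hfγ h2
    · exact h1
  have hbnm : b ∉ f.erase u := fun h2 => hbf (Finset.mem_of_mem_erase h2)
  have hBcard : (insert b (f.erase u)).card = p := by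
    rw [Finset.card_insert_of_notMem hbnm, herase]; omega
  have hsdB : ∀ E' : Finset (Fin n), u ∈ E' → b ∈ E' →
      (f \ insert b (f.erase u)) ∪ (insert b (f.erase u) \ f) ⊆ E' := by
    intro E' huE' hbE' v hv
    simp only [Finset.mem_union, Finset.mem_sdiff, Finset.mem_insert,
      Finset.mem_erase] at hv
    rcases hv with ⟨h1, h2⟩ | ⟨h1, h2⟩
    · push_neg at h2
      by_cases hvu : v = u
      · rw [hvu]; exact huE'
      · exact absurd h1 (h2.2 hvu)
    · rcases h1 with rfl | ⟨_, hvf⟩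
      · exact hbE'
      · exact absurd hvf h2
  have hBfg : col (insert b (f.erase u)) = col f ∨ col (insert b (f.erase u)) = col g := by
    by_contra hcon
    push_neg at hcon
    exact hc f (insert b (f.erase u)) g hfc hBcard hgc
      (fun h2 => hcon.1 h2.symm) hfg hcon.2 (hsdB g hug hbg)
  have hBfh : col (insert b (f.erase u)) = col f ∨
      col (insert b (f.erase u)) = col (insert w (f.erase u)) := by
    by_contra hcon
    push_neg at hcon
    exact hc f (insert b (f.erase u)) E hfc hBcard hEcard
      (fun h2 => hcon.1 h2.symm) (by rw [hEh]; exact hfh)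
      (by rw [hEh]; exact hcon.2) (hsdB E huE hbE)
  rcases hBfg with h1 | h1
  · exact h1
  · exfalso
    rcases hBfh with h2 | h2
    · exact hfg (h2.symm.trans h1)
    · rw [h1] at h2
      rcases hhβγ with h3 | h3 <;> rw [h3] at h2
      · exact hgβ h2
      · exact hgγ h2

set_option maxHeartbeats 1000000 in
lemma aux (n p : ℕ) (hp : 3 ≤ p) (hn : p + 1 ≤ n)
    (col : Finset (Fin n) → ℕ) (hc : RainbowCancellative n p col)
    (X : Finset (Fin n)) (hX : X.card = p - 1)
    (β γ : ℕ) (hβγ : β ≠ γ)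
    (B1 B2 : Finset (Fin n))
    (hB1 : ∀ v : Fin n, v ∈ B1 ↔ v ∉ X ∧ col (insert v X) = β)
    (hB2 : ∀ v : Fin n, v ∈ B2 ↔ v ∉ X ∧ col (insert v X) = γ)
    (w : Fin n) (hw : w ∈ B2) :
    ∀ k (f g : Finset (Fin n)), (f \ g).card = k → f ⊆ B1 → g ⊆ B1 →
      f.card = p → g.card = p → (f ∩ g).Nonempty → col f ≠ col g →
      col f ≠ β → col f ≠ γ → col g ≠ β → col g ≠ γ → False := by
  have key := key n p hp hn col hc X hX β γ hβγ B1 B2 hB1 hB2 w hw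
  intro k
  induction k using Nat.strong_induction_on with
  | _ k IH =>
    intro f g hk hfB hgB hfc hgc hint hfg hfβ hfγ hgβ hgγ
    rcases Nat.eq_zero_or_pos k with rfl | hkpos
    · have h0 : f \ g = ∅ := Finset.card_eq_zero.mp hk
      have hsub : f ⊆ g := Finset.sdiff_eq_empty_iff_subset.mp h0
      have : f = g := Finset.eq_of_subset_of_card_le hsub (by rw [hfc, hgc])
      exact hfg (this ▸ rfl)
    · obtain ⟨u, hu⟩ := hint
      have huf : u ∈ f := (Finset.mem_inter.mp hu).1
      have hug : u ∈ g := (Finset.mem_inter.mp hu).2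
      have hfgne : (f \ g).Nonempty := by rw [← Finset.card_pos, hk]; exact hkpos
      have hcard_gf : (g \ f).card = k := by
        have e1 := Finset.card_sdiff_add_card_inter f g
        have e2 := Finset.card_sdiff_add_card_inter g f
        rw [Finset.inter_comm] at e2
        omega
      have hgfne : (g \ f).Nonempty := by rw [← Finset.card_pos, hcard_gf]; exact hkpos
      obtain ⟨a, ha⟩ := hfgne
      obtain ⟨b, hb⟩ := hgfne
      have haf : a ∈ f := (Finset.mem_sdiff.mp ha).1
      have hag : a ∉ g := (Finset.mem_sdiff.mp ha).2
      have hbg : b ∈ g := (Finset.mem_sdiff.mp hb).1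
      have hbf : b ∉ f := (Finset.mem_sdiff.mp hb).2
      have hau : a ≠ u := fun h => hag (h ▸ hug)
      have hbu : b ≠ u := fun h => hbf (h ▸ huf)
      have hBcol : col (insert b (f.erase u)) = col f :=
        key f g u b hfB hgB hfc hgc hfβ hfγ hgβ hgγ hfg huf hug hbg hbf
      have hB'col : col (insert a (g.erase u)) = col g :=
        key g f u a hgB hfB hgc hfc hgβ hgγ hfβ hfγ (Ne.symm hfg) hug huf haf hag
      have hbnm : b ∉ f.erase u := fun h2 => hbf (Finset.mem_of_mem_erase h2)
      have hanm : a ∉ g.erase u := fun h2 => hag (Finset.mem_of_mem_erase h2)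
      have hBcard : (insert b (f.erase u)).card = p := by
        rw [Finset.card_insert_of_notMem hbnm, Finset.card_erase_of_mem huf, hfc]; omega
      have hB'card : (insert a (g.erase u)).card = p := by
        rw [Finset.card_insert_of_notMem hanm, Finset.card_erase_of_mem hug, hgc]; omega
      have hBB' : insert b (f.erase u) \ insert a (g.erase u) = (f \ g).erase a := by
        ext v
        simp only [Finset.mem_sdiff, Finset.mem_insert, Finset.mem_erase]
        constructor
        · rintro ⟨h1, h2⟩
          push_neg at h2
          rcases h1 with rfl | ⟨hvu, hvf⟩
          · exact absurd hbg (h2.2 hbu)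
          · exact ⟨h2.1, hvf, h2.2 hvu⟩
        · rintro ⟨hva, hvf, hvg⟩
          have hvu : v ≠ u := fun h => hvg (h ▸ hug)
          refine ⟨Or.inr ⟨hvu, hvf⟩, ?_⟩
          push_neg
          exact ⟨hva, fun _ => hvg⟩
      apply IH ((f \ g).erase a).card
        (by rw [Finset.card_erase_of_mem ha, hk]; omega)
        (insert b (f.erase u)) (insert a (g.erase u)) (by rw [hBB'])
      · intro v hv
        rcases Finset.mem_insert.mp hv with rfl | hv
        · exact hgB hbg
        · exact hfB (Finset.mem_of_mem_erase hv)
      · intro v hv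
        rcases Finset.mem_insert.mp hv with rfl | hv
        · exact hfB haf
        · exact hgB (Finset.mem_of_mem_erase hv)
      · exact hBcard
      · exact hB'card
      · exact ⟨a, Finset.mem_inter.mpr ⟨Finset.mem_insert_of_mem
          (Finset.mem_erase.mpr ⟨hau, haf⟩), Finset.mem_insert_self _ _⟩⟩
      · rw [hBcol, hB'col]; exact hfg
      · rw [hBcol]; exact hfβ
      · rw [hBcol]; exact hfγ
      · rw [hB'col]; exact hgβ
      · rw [hB'col]; exact hgγ


/-- Claim 3.4: in the situation above, there do not exist two distinct
intersecting edges, each lying entirely in `A1` or entirely in `A2`, with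
distinct colors both outside `{α1, α2}`. -/
theorem no_two_intersecting_special (n p : ℕ) (hp : 3 ≤ p) (hn : p + 1 ≤ n)
    (col : Finset (Fin n) → ℕ) (hc : RainbowCancellative n p col)
    (X : Finset (Fin n)) (hX : X.card = p - 1)
    (α1 α2 : ℕ) (hα : α1 ≠ α2)
    (hall : ∀ v : Fin n, v ∉ X → col (insert v X) = α1 ∨ col (insert v X) = α2)
    (h1 : ∃ v : Fin n, v ∉ X ∧ col (insert v X) = α1)
    (h2 : ∃ v : Fin n, v ∉ X ∧ col (insert v X) = α2)
    (A1 A2 : Finset (Fin n))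
    (hA1 : ∀ v : Fin n, v ∈ A1 ↔ v ∉ X ∧ col (insert v X) = α1)
    (hA2 : ∀ v : Fin n, v ∈ A2 ↔ v ∉ X ∧ col (insert v X) = α2) :
    ¬ ∃ f g : Finset (Fin n),
      f.card = p ∧ g.card = p ∧ f ≠ g ∧ (f ∩ g).Nonempty ∧
      (f ⊆ A1 ∨ f ⊆ A2) ∧ (g ⊆ A1 ∨ g ⊆ A2) ∧
      col f ≠ col g ∧
      col f ≠ α1 ∧ col f ≠ α2 ∧ col g ≠ α1 ∧ col g ≠ α2 := by
  rintro ⟨f, g, hfc, hgc, hne, hint, hf12, hg12, hcol, hfα1, hfα2, hgα1, hgα2⟩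
  obtain ⟨u, hu⟩ := hint
  have huf : u ∈ f := (Finset.mem_inter.mp hu).1
  have hug : u ∈ g := (Finset.mem_inter.mp hu).2
  have hmixed : ∀ v : Fin n, v ∈ A1 → v ∈ A2 → False := by
    intro v hv1 hv2
    exact hα (((hA1 v).1 hv1).2.symm.trans ((hA2 v).1 hv2).2)
  obtain ⟨w1, hw1X, hw1c⟩ := h1
  obtain ⟨w2, hw2X, hw2c⟩ := h2
  have hw1 : w1 ∈ A1 := (hA1 w1).2 ⟨hw1X, hw1c⟩
  have hw2 : w2 ∈ A2 := (hA2 w2).2 ⟨hw2X, hw2c⟩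
  rcases hf12 with hf | hf <;> rcases hg12 with hg | hg
  · exact aux n p hp hn col hc X hX α1 α2 hα A1 A2 hA1 hA2 w2 hw2
      (f \ g).card f g rfl hf hg hfc hgc ⟨u, hu⟩ hcol hfα1 hfα2 hgα1 hgα2
  · exact hmixed u (hf huf) (hg hug)
  · exact hmixed u (hg hug) (hf huf)
  · exact aux n p hp hn col hc X hX α2 α1 (Ne.symm hα) A2 A1 hA2 hA1 w1 hw1
      (f \ g).card f g rfl hf hg hfc hgc ⟨u, hu⟩ hcol hfα2 hfα1 hgα2 hgα1
end

section
/- Let p ≥ 3 and n ≥ p + 1 be integers, and let c be a rainbow cancellative edge-coloring of K_n^(p). Let X be a (p−1)-element vertex set and let α1 ≠ α2 be two colors such that for every vertex v outside X the edge X ∪ {v} has color α1 or α2, and both colors occur; for i = 1, 2 let A_i = {v ∉ X : c(X ∪ {v}) = α_i}. Then there exists i ∈ {1, 2} such that every edge entirely contained in A_i has color α1 or α2. -/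
open Finset
open scoped symmDiff

lemma Finset.symmDiff_insert_insert_subset {α : Type*} [DecidableEq α] (s : Finset α)
    (a b : α) : insert a s ∆ insert b s ⊆ {a, b} := by
  intro x
  simp only [mem_symmDiff, mem_insert, mem_singleton]
  tauto

lemma Finset.symmDiff_insert_erase_subset {α : Type*} [DecidableEq α] (s : Finset α)
    (a b : α) : s ∆ insert b (s.erase a) ⊆ {a, b} := by
  intro x
  simp only [mem_symmDiff, mem_insert, mem_erase, mem_singleton]
  tauto

lemma Fin.exists_superset_card_eq_of_card_eq {n p : ℕ} {s f : Finset (Fin n)}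
    (hf : f.card = p) (hs : s.card ≤ p) : ∃ C, s ⊆ C ∧ C.card = p :=
  exists_superset_card_eq hs (hf ▸ (card_le_univ f))

namespace RainbowCancellative

variable {n p : ℕ} {col : Finset (Fin n) → ℕ}

theorem col_eq_or_col_eq (hc : RainbowCancellative n p col) {A B C : Finset (Fin n)}
    (hA : A.card = p) (hB : B.card = p) (hC : C.card = p) (hAB : col A ≠ col B)
    (hABC : A ∆ B ⊆ C) : col C = col A ∨ col C = col B := by
  by_contra! h
  exact hc A B C hA hB hC hAB h.1.symm h.2.symm hABC

theorem col_eq_of_two_covers (hc : RainbowCancellative n p col) {A B C₁ C₂ : Finset (Fin n)}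
    (hA : A.card = p) (hB : B.card = p) (hC₁ : C₁.card = p) (hC₂ : C₂.card = p)
    (h₁ : A ∆ B ⊆ C₁) (h₂ : A ∆ B ⊆ C₂) (h₁₂ : col C₁ ≠ col C₂)
    (hA₁ : col A ≠ col C₁) (hA₂ : col A ≠ col C₂) : col B = col A := by
  by_contra hBA
  have e₁ := hc.col_eq_or_col_eq hA hB hC₁ (Ne.symm hBA) h₁
  have e₂ := hc.col_eq_or_col_eq hA hB hC₂ (Ne.symm hBA) h₂
  omega

theorem col_eq_of_subset_union (hc : RainbowCancellative n p col) {f Y : Finset (Fin n)}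
    (hf : f.card = p)
    (hcover : ∀ w ∈ f, ∀ x ∈ Y, ∃ C₁ C₂ : Finset (Fin n), C₁.card = p ∧ C₂.card = p ∧
      {w, x} ⊆ C₁ ∧ {w, x} ⊆ C₂ ∧ col C₁ ≠ col C₂ ∧ col C₁ ≠ col f ∧ col C₂ ≠ col f)
    {B : Finset (Fin n)} (hB : B.card = p) (hBf : B ⊆ f ∪ Y) : col B = col f := by
  induction hk : (B \ f).card generalizing B with
  | zero =>
    have hBf : B ⊆ f := sdiff_eq_empty_iff_subset.1 (card_eq_zero.1 hk)
    rw [eq_of_subset_of_card_le hBf (hf ▸ hB.ge)]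
  | succ k ih =>
    obtain ⟨x, hx⟩ : (B \ f).Nonempty := card_pos.1 (by omega)
    obtain ⟨hxB, hxf⟩ := mem_sdiff.1 hx
    obtain ⟨w, hw⟩ : (f \ B).Nonempty := by
      rw [nonempty_iff_ne_empty, Ne, sdiff_eq_empty_iff_subset]
      intro hfB
      exact hxf (eq_of_subset_of_card_le hfB (hB ▸ hf.ge) ▸ hxB)
    obtain ⟨hwf, hwB⟩ := mem_sdiff.1 hw
    set A := insert w (B.erase x)
    have hA : A.card = p := by
      rw [card_insert_of_notMem (fun h => hwB (mem_of_mem_erase h)), card_erase_of_mem hxB]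
      have := card_pos.2 ⟨x, hxB⟩
      omega
    have hAf : A ⊆ f ∪ Y := insert_subset (mem_union_left _ hwf) ((erase_subset _ _).trans hBf)
    have hAk : (A \ f).card = k := by
      have : A \ f = (B \ f).erase x := by
        ext y
        simp only [A, mem_sdiff, mem_insert, mem_erase]
        grind
      rw [this, card_erase_of_mem hx, hk, Nat.add_sub_cancel]
    have hAcol := ih hA hAf hAk
    have hxY : x ∈ Y := (mem_union.1 (hBf hxB)).resolve_left hxf
    obtain ⟨C₁, C₂, hC₁, hC₂, hwx₁, hwx₂, h₁₂, h₁, h₂⟩ := hcover w hwf x hxY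
    have hAB : A ∆ B ⊆ {w, x} := by
      rw [symmDiff_comm, pair_comm]
      exact symmDiff_insert_erase_subset B x w
    rw [hc.col_eq_of_two_covers hA hB hC₁ hC₂ (hAB.trans hwx₁) (hAB.trans hwx₂) h₁₂
      (hAcol ▸ h₁.symm) (hAcol ▸ h₂.symm), hAcol]

theorem col_eq_or_of_mem_of_mem (hc : RainbowCancellative n p col) {X W : Finset (Fin n)}
    (hX : X.card + 1 = p) {v u : Fin n} (hv : v ∉ X) (hu : u ∉ X)
    (hvu : col (insert v X) ≠ col (insert u X)) (hW : W.card = p) (hvW : v ∈ W) (huW : u ∈ W) :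
    col W = col (insert v X) ∨ col W = col (insert u X) :=
  hc.col_eq_or_col_eq ((card_insert_of_notMem hv).trans hX) ((card_insert_of_notMem hu).trans hX)
    hW hvu ((symmDiff_insert_insert_subset X v u).trans
      (insert_subset hvW (singleton_subset_iff.2 huW)))

theorem col_eq_of_mem_of_mem (hc : RainbowCancellative n p col) (hp : 2 ≤ p)
    {X f : Finset (Fin n)} {a b : ℕ} (hX : X.card + 1 = p) (hf : f.card = p)
    (hfX : ∀ w ∈ f, w ∉ X ∧ col (insert w X) = b) (hfa : col f ≠ a) (hfb : col f ≠ b)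
    (hab : a ≠ b) {u : Fin n} (hu : u ∉ X) (hua : col (insert u X) = a) {v : Fin n} (hv : v ∈ f)
    {W W' : Finset (Fin n)} (hW : W.card = p) (hW' : W'.card = p) (hvW : v ∈ W) (huW : u ∈ W)
    (hvW' : v ∈ W') (huW' : u ∈ W') : col W = col W' := by
  have huf : u ∉ f := fun h => hab (hua.symm.trans (hfX u h).2)
  set C := insert u (f.erase v)
  have hC : C.card = p := by
    rw [card_insert_of_notMem (fun h => huf (mem_of_mem_erase h)), card_erase_of_mem hv]
    omega
  obtain ⟨w, hw, hwv⟩ := exists_mem_ne (by omega : 1 < f.card) v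
  have hCab : col C = b ∨ col C = a := by
    have := hc.col_eq_or_of_mem_of_mem hX (hfX w hw).1 hu
      (by rw [(hfX w hw).2, hua]; exact hab.symm) hC
      (mem_insert_of_mem (mem_erase.2 ⟨hwv, hw⟩)) (mem_insert_self u _)
    rwa [(hfX w hw).2, hua] at this
  have hcol : ∀ W : Finset (Fin n), W.card = p → v ∈ W → u ∈ W → col W = col C := by
    intro W hW hvW huW
    have e₁ := hc.col_eq_or_col_eq hf hC hW (by omega)
      ((symmDiff_insert_erase_subset f v u).trans (insert_subset hvW (singleton_subset_iff.2 huW)))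
    have e₂ := hc.col_eq_or_of_mem_of_mem hX (hfX v hv).1 hu
      (by rw [(hfX v hv).2, hua]; exact hab.symm) hW hvW huW
    rw [(hfX v hv).2, hua] at e₂
    omega
  rw [hcol W hW hvW huW, hcol W' hW' hvW' huW']

theorem col_eq_part_of_mem_of_mem (hc : RainbowCancellative n p col) (hp : 3 ≤ p)
    {X f : Finset (Fin n)} {a b : ℕ} (hX : X.card + 1 = p) (hf : f.card = p)
    (hfX : ∀ w ∈ f, w ∉ X ∧ col (insert w X) = b) (hfa : col f ≠ a) (hfb : col f ≠ b)
    (hab : a ≠ b) {u : Fin n} (hu : u ∉ X) (hua : col (insert u X) = a) {v : Fin n} (hv : v ∈ f)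
    {W : Finset (Fin n)} (hW : W.card = p) (hvW : v ∈ W) (huW : u ∈ W) : col W = b := by
  have hWba : col W = b ∨ col W = a := by
    have := hc.col_eq_or_of_mem_of_mem hX (hfX v hv).1 hu
      (by rw [(hfX v hv).2, hua]; exact hab.symm) hW hvW huW
    rwa [(hfX v hv).2, hua] at this
  refine hWba.resolve_right fun hWa => ?_
  have hedge : ∀ w ∈ f, ∀ C : Finset (Fin n), C.card = p → w ∈ C → u ∈ C → col C = a := by
    intro w hw C hC hwC huC
    obtain ⟨E, hvwuE, hE⟩ :=
      Fin.exists_superset_card_eq_of_card_eq hf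
        ((card_le_three (a := v) (b := w) (c := u)).trans hp)
    simp only [insert_subset_iff, singleton_subset_iff] at hvwuE
    obtain ⟨hvE, hwE, huE⟩ := hvwuE
    rw [← hWa,
      ← hc.col_eq_of_mem_of_mem (by omega) hX hf hfX hfa hfb hab hu hua hw hE hC hwE huE hwC huC,
      hc.col_eq_of_mem_of_mem (by omega) hX hf hfX hfa hfb hab hu hua hv hE hW hvE huE hvW huW]
  have hcover : ∀ w ∈ f, ∀ x ∈ X, ∃ C₁ C₂ : Finset (Fin n), C₁.card = p ∧ C₂.card = p ∧
      {w, x} ⊆ C₁ ∧ {w, x} ⊆ C₂ ∧ col C₁ ≠ col C₂ ∧ col C₁ ≠ col f ∧ col C₂ ≠ col f := by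
    intro w hw x hx
    obtain ⟨C₂, hwxuC, hC₂⟩ :=
      Fin.exists_superset_card_eq_of_card_eq hf
        ((card_le_three (a := u) (b := w) (c := x)).trans hp)
    have hC₂a := hedge w hw C₂ hC₂ (hwxuC (mem_insert_of_mem (mem_insert_self w _)))
      (hwxuC (mem_insert_self u _))
    refine ⟨insert w X, C₂, (card_insert_of_notMem (hfX w hw).1).trans hX, hC₂,
      insert_subset_iff.2 ⟨mem_insert_self w X, singleton_subset_iff.2 (mem_insert_of_mem hx)⟩,
      (subset_insert _ _).trans hwxuC, ?_, ?_, ?_⟩ <;> have := (hfX w hw).2 <;> omega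
  have hvX : insert v X ⊆ f ∪ X := insert_subset (mem_union_left _ hv) subset_union_right
  exact hfb ((hc.col_eq_of_subset_union hf hcover
    ((card_insert_of_notMem (hfX v hv).1).trans hX) hvX).symm.trans (hfX v hv).2)

end RainbowCancellative

theorem one_part_two_colors_general (n p : ℕ) (hp : 3 ≤ p)
    (col : Finset (Fin n) → ℕ) (hc : RainbowCancellative n p col)
    (X : Finset (Fin n)) (hX : X.card = p - 1)
    (α1 α2 : ℕ) (hα : α1 ≠ α2)
    (A1 A2 : Finset (Fin n))
    (hA1 : ∀ v : Fin n, v ∈ A1 ↔ v ∉ X ∧ col (insert v X) = α1)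
    (hA2 : ∀ v : Fin n, v ∈ A2 ↔ v ∉ X ∧ col (insert v X) = α2) :
    (∀ f : Finset (Fin n), f.card = p → f ⊆ A1 → col f = α1 ∨ col f = α2) ∨
    (∀ f : Finset (Fin n), f.card = p → f ⊆ A2 → col f = α1 ∨ col f = α2) := by
  by_contra! h
  obtain ⟨⟨f₁, hf₁, hf₁A, hf₁α1, hf₁α2⟩, ⟨f₂, hf₂, hf₂A, hf₂α1, hf₂α2⟩⟩ := h
  have hX' : X.card + 1 = p := by omega
  have hf₁X : ∀ w ∈ f₁, w ∉ X ∧ col (insert w X) = α1 := fun w hw => (hA1 w).1 (hf₁A hw)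
  have hf₂X : ∀ w ∈ f₂, w ∉ X ∧ col (insert w X) = α2 := fun w hw => (hA2 w).1 (hf₂A hw)
  obtain ⟨v, hv⟩ : f₁.Nonempty := card_pos.1 (by omega)
  obtain ⟨u, hu⟩ : f₂.Nonempty := card_pos.1 (by omega)
  obtain ⟨W, hvuW, hW⟩ :=
    Fin.exists_superset_card_eq_of_card_eq hf₁ ((card_le_two (a := v) (b := u)).trans (by omega))
  obtain ⟨hvW, huW⟩ : v ∈ W ∧ u ∈ W := by simpa [insert_subset_iff] using hvuW
  have hW₁ : col W = α1 := hc.col_eq_part_of_mem_of_mem hp hX' hf₁ hf₁X hf₁α2 hf₁α1 hα.symm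
    (hf₂X u hu).1 (hf₂X u hu).2 hv hW hvW huW
  have hW₂ : col W = α2 := hc.col_eq_part_of_mem_of_mem hp hX' hf₂ hf₂X hf₂α1 hf₂α2 hα
    (hf₁X v hv).1 (hf₁X v hv).2 hu hW huW hvW
  exact hα (hW₁.symm.trans hW₂)

/-- Claim 3.5: in the situation above, one of the two parts `A1, A2` spans only
edges colored `α1` or `α2`. -/
theorem one_part_two_colors (n p : ℕ) (hp : 3 ≤ p) (hn : p + 1 ≤ n)
    (col : Finset (Fin n) → ℕ) (hc : RainbowCancellative n p col)
    (X : Finset (Fin n)) (hX : X.card = p - 1)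
    (α1 α2 : ℕ) (hα : α1 ≠ α2)
    (hall : ∀ v : Fin n, v ∉ X → col (insert v X) = α1 ∨ col (insert v X) = α2)
    (h1 : ∃ v : Fin n, v ∉ X ∧ col (insert v X) = α1)
    (h2 : ∃ v : Fin n, v ∉ X ∧ col (insert v X) = α2)
    (A1 A2 : Finset (Fin n))
    (hA1 : ∀ v : Fin n, v ∈ A1 ↔ v ∉ X ∧ col (insert v X) = α1)
    (hA2 : ∀ v : Fin n, v ∈ A2 ↔ v ∉ X ∧ col (insert v X) = α2) :
    (∀ f : Finset (Fin n), f.card = p → f ⊆ A1 → col f = α1 ∨ col f = α2) ∨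
    (∀ f : Finset (Fin n), f.card = p → f ⊆ A2 → col f = α1 ∨ col f = α2) :=
  one_part_two_colors_general n p hp col hc X hX α1 α2 hα A1 A2 hA1 hA2
end

section
/- For every integer n ≥ 4, ar(n, F4) ≥ m(n) + 1; that is, there exists a rainbow F4-free edge-coloring of K_n^(3) using at least m(n) + 1 colors. -/
/-- A partial Steiner triple system on the vertex set `Fin n`: a family of
3-element sets in which every pair of vertices lies in at most one triple
(equivalently, two distinct triples meet in at most one vertex). -/
def IsPSTS (n : ℕ) (P : Finset (Finset (Fin n))) : Prop :=
  (∀ T ∈ P, T.card = 3) ∧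
  ∀ T1 ∈ P, ∀ T2 ∈ P, T1 ≠ T2 → (T1 ∩ T2).card ≤ 1

/-- `mPSTS n` is the maximum number of triples in a partial Steiner triple
system on `n` vertices. -/
noncomputable def mPSTS (n : ℕ) : ℕ :=
  sSup {k : ℕ | ∃ P : Finset (Finset (Fin n)), IsPSTS n P ∧ P.card = k}

/-- For every `n ≥ 4`, `ar(n, F4) ≥ m(n) + 1`: there is a rainbow `F4`-free
edge-coloring of `K_n^(3)` using at least `m(n) + 1` colors. -/
theorem ar_F4_lower (n : ℕ) (hn : 4 ≤ n) :
    ∃ col : Finset (Fin n) → ℕ, RainbowF4Free n col ∧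
      mPSTS n + 1 ≤ numColors n 3 col := by
  classical
  have hne : {k : ℕ | ∃ P : Finset (Finset (Fin n)), IsPSTS n P ∧ P.card = k}.Nonempty :=
    ⟨0, ∅, ⟨fun T hT => by simp at hT, fun T1 h1 => by simp at h1⟩, rfl⟩
  have hbdd : BddAbove {k : ℕ | ∃ P : Finset (Finset (Fin n)), IsPSTS n P ∧ P.card = k} := by
    refine ⟨Fintype.card (Finset (Fin n)), ?_⟩
    rintro k ⟨P, -, rfl⟩
    exact P.card_le_univ.trans_eq Finset.card_univ
  obtain ⟨P, hP, hPcard⟩ := Nat.sSup_mem hne hbdd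
  set col : Finset (Fin n) → ℕ := fun e => if e ∈ P then Encodable.encode e + 1 else 0 with hcol
  have hcolP : ∀ e ∈ P, col e = Encodable.encode e + 1 := fun e he => by simp [hcol, he]
  have hcol0 : ∀ e ∉ P, col e = 0 := fun e he => by simp [hcol, he]
  have key : ∀ T1 ∈ P, ∀ T2 ∈ P, ∀ v w : Fin n, v ≠ w →
      v ∈ T1 → v ∈ T2 → w ∈ T1 → w ∈ T2 → T1 = T2 := by
    intro T1 h1 T2 h2 v w hvw hv1 hv2 hw1 hw2
    by_contra hne'
    have h := hP.2 T1 h1 T2 h2 hne'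
    have hsub : ({v, w} : Finset (Fin n)) ⊆ T1 ∩ T2 := by
      intro x hx
      simp only [Finset.mem_insert, Finset.mem_singleton] at hx
      rcases hx with rfl | rfl <;> simp [Finset.mem_inter, hv1, hv2, hw1, hw2]
    have h2' : 2 ≤ (T1 ∩ T2).card := by
      have := Finset.card_le_card hsub
      rwa [Finset.card_insert_of_notMem (by simpa using hvw), Finset.card_singleton] at this
    omega
  refine ⟨col, ?_, ?_⟩
  · rintro a b c d hab hac had hbc hbd hcd ⟨h1, h2, h3⟩
    by_cases hX : ({a, b, c} : Finset (Fin n)) ∈ P <;>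
        by_cases hY : ({a, b, d} : Finset (Fin n)) ∈ P <;>
        by_cases hZ : ({b, c, d} : Finset (Fin n)) ∈ P
    · exact h1 (congrArg col (key _ hX _ hY a b hab (by simp) (by simp) (by simp) (by simp)))
    · exact h1 (congrArg col (key _ hX _ hY a b hab (by simp) (by simp) (by simp) (by simp)))
    · exact h2 (congrArg col (key _ hX _ hZ b c hbc (by simp) (by simp) (by simp) (by simp)))
    · exact h3 ((hcol0 _ hY).trans (hcol0 _ hZ).symm)
    · exact h3 (congrArg col (key _ hY _ hZ b d hbd (by simp) (by simp) (by simp) (by simp)))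
    · exact h2 ((hcol0 _ hX).trans (hcol0 _ hZ).symm)
    · exact h1 ((hcol0 _ hX).trans (hcol0 _ hY).symm)
    · exact h1 ((hcol0 _ hX).trans (hcol0 _ hY).symm)
  · obtain ⟨x0, x1, x2, x3, h01, h02, h03, h12, h13, h23⟩ :
        ∃ x0 x1 x2 x3 : Fin n, x0 ≠ x1 ∧ x0 ≠ x2 ∧ x0 ≠ x3 ∧ x1 ≠ x2 ∧ x1 ≠ x3 ∧ x2 ≠ x3 :=
      ⟨⟨0, by omega⟩, ⟨1, by omega⟩, ⟨2, by omega⟩, ⟨3, by omega⟩,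
        by simp [Fin.ext_iff], by simp [Fin.ext_iff], by simp [Fin.ext_iff],
        by simp [Fin.ext_iff], by simp [Fin.ext_iff], by simp [Fin.ext_iff]⟩
    have cardA : ({x0, x1, x2} : Finset (Fin n)).card = 3 :=
      Finset.card_eq_three.mpr ⟨x0, x1, x2, h01, h02, h12, rfl⟩
    have cardB : ({x0, x1, x3} : Finset (Fin n)).card = 3 :=
      Finset.card_eq_three.mpr ⟨x0, x1, x3, h01, h03, h13, rfl⟩
    have hzero : ∃ e : Finset (Fin n), e.card = 3 ∧ col e = 0 := by
      by_cases hA : ({x0, x1, x2} : Finset (Fin n)) ∈ P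
      · by_cases hB : ({x0, x1, x3} : Finset (Fin n)) ∈ P
        · exfalso
          have heq := key _ hA _ hB x0 x1 h01 (by simp) (by simp) (by simp) (by simp)
          have : x2 ∈ ({x0, x1, x3} : Finset (Fin n)) := heq ▸ (by simp)
          simp only [Finset.mem_insert, Finset.mem_singleton] at this
          rcases this with h | h | h
          · exact h02 h.symm
          · exact h12 h.symm
          · exact h23 h
        · exact ⟨_, cardB, hcol0 _ hB⟩
      · exact ⟨_, cardA, hcol0 _ hA⟩
    have hsub : insert 0 (P.image col) ⊆
        (((Finset.univ : Finset (Finset (Fin n))).filter (fun e => e.card = 3)).image col) := by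
      intro k hk
      rcases Finset.mem_insert.mp hk with rfl | hk
      · obtain ⟨e, he3, he0⟩ := hzero
        exact Finset.mem_image.mpr ⟨e, Finset.mem_filter.mpr ⟨Finset.mem_univ _, he3⟩, he0⟩
      · obtain ⟨T, hT, rfl⟩ := Finset.mem_image.mp hk
        exact Finset.mem_image.mpr ⟨T, Finset.mem_filter.mpr ⟨Finset.mem_univ _, hP.1 T hT⟩, rfl⟩
    have h0notin : (0 : ℕ) ∉ P.image col := by
      intro h
      obtain ⟨T, hT, hTc⟩ := Finset.mem_image.mp h
      rw [hcolP T hT] at hTc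
      omega
    have hinj : Set.InjOn col P := by
      intro x hx y hy hxy
      rw [hcolP x hx, hcolP y hy] at hxy
      exact Encodable.encode_injective (by omega)
    have hfin : P.card + 1 ≤ numColors n 3 col := by
      have h := Finset.card_le_card hsub
      rwa [Finset.card_insert_of_notMem h0notin, Finset.card_image_of_injOn hinj] at h
    have hm : mPSTS n = P.card := hPcard.symm
    omega
end

section
/- Let n ≥ 4 be an integer and let 𝓟 be a partial Steiner triple system on an n-element vertex set V (a family of 3-element subsets of V in which every pair of vertices lies in at most one triple). Define an edge-coloring of K_n^(3) on V by giving each triple of 𝓟 its own distinct color and coloring every 3-element subset of V not in 𝓟 with one additional common color. Then this coloring is rainbow F4-free. -/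
/-- Giving each triple of a partial Steiner triple system its own distinct color
and giving all remaining triples one additional common color yields a rainbow
`F4`-free coloring of `K_n^(3)`. -/
theorem psts_coloring_rainbowF4Free (n : ℕ) (hn : 4 ≤ n)
    (P : Finset (Finset (Fin n))) (hP : IsPSTS n P)
    (col : Finset (Fin n) → ℕ) (α : ℕ)
    (hinj : ∀ T1 ∈ P, ∀ T2 ∈ P, col T1 = col T2 → T1 = T2)
    (hne : ∀ T ∈ P, col T ≠ α)
    (hout : ∀ T : Finset (Fin n), T.card = 3 → T ∉ P → col T = α) :
    RainbowF4Free n col := by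
  intro a b c d hab hac had hbc hbd hcd
  rintro ⟨h1, h2, h3⟩
  -- cardinalities
  have c1 : ({a, b, c} : Finset (Fin n)).card = 3 := by
    rw [Finset.card_insert_of_notMem (by simp [hab, hac]),
        Finset.card_insert_of_notMem (by simp [hbc]), Finset.card_singleton]
  have c2 : ({a, b, d} : Finset (Fin n)).card = 3 := by
    rw [Finset.card_insert_of_notMem (by simp [hab, had]),
        Finset.card_insert_of_notMem (by simp [hbd]), Finset.card_singleton]
  have c3 : ({b, c, d} : Finset (Fin n)).card = 3 := by
    rw [Finset.card_insert_of_notMem (by simp [hbc, hbd]),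
        Finset.card_insert_of_notMem (by simp [hcd]), Finset.card_singleton]
  -- helper: two triples of P sharing two distinct vertices are impossible
  have key : ∀ T1 T2 : Finset (Fin n), T1 ∈ P → T2 ∈ P → col T1 ≠ col T2 →
      ∀ x y : Fin n, x ≠ y → x ∈ T1 → y ∈ T1 → x ∈ T2 → y ∈ T2 → False := by
    intro T1 T2 h1 h2 hne' x y hxy hx1 hy1 hx2 hy2
    have hne2 : T1 ≠ T2 := fun h => hne' (by rw [h])
    have hle := hP.2 T1 h1 T2 h2 hne2
    have hsub : ({x, y} : Finset (Fin n)) ⊆ T1 ∩ T2 := by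
      intro z hz
      simp only [Finset.mem_insert, Finset.mem_singleton] at hz
      rcases hz with rfl | rfl <;> simp [Finset.mem_inter, *]
    have : ({x, y} : Finset (Fin n)).card ≤ (T1 ∩ T2).card := Finset.card_le_card hsub
    rw [Finset.card_insert_of_notMem (by simp [hxy]), Finset.card_singleton] at this
    omega
  -- at most one of the three triples is outside P
  by_cases p1 : ({a, b, c} : Finset (Fin n)) ∈ P
  · by_cases p2 : ({a, b, d} : Finset (Fin n)) ∈ P
    · exact key _ _ p1 p2 h1 a b hab (by simp) (by simp) (by simp) (by simp)
    · by_cases p3 : ({b, c, d} : Finset (Fin n)) ∈ P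
      · exact key _ _ p1 p3 h2 b c hbc (by simp) (by simp) (by simp) (by simp)
      · exact h3 ((hout _ c2 p2).trans (hout _ c3 p3).symm)
  · by_cases p2 : ({a, b, d} : Finset (Fin n)) ∈ P
    · by_cases p3 : ({b, c, d} : Finset (Fin n)) ∈ P
      · exact key _ _ p2 p3 h3 b d hbd (by simp) (by simp) (by simp) (by simp)
      · exact h2 ((hout _ c1 p1).trans (hout _ c3 p3).symm)
    · exact h1 ((hout _ c1 p1).trans (hout _ c2 p2).symm)
end

section
/- Let c be a rainbow F4-free edge-coloring of K_n^(3) on vertex set V. Let W ⊆ V with |W| = 7, and let B be a family of 3-element subsets of W such that every pair of vertices of W is contained in exactly one member of B (so B is a Steiner triple system of order 7 on W). Suppose the members of B receive pairwise distinct colors, and each of these colors is used on no other 3-element subset of V. Then all 3-element subsets of W that are not in B receive one common color. -/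
section Aux
open Finset
variable {n : ℕ} {col : Finset (Fin n) → ℕ} {B : Finset (Finset (Fin n))} {W : Finset (Fin n)}

lemma tri_card {x y z : Fin n} (hxy : x ≠ y) (hxz : x ≠ z) (hyz : y ≠ z) :
    ({x,y,z} : Finset (Fin n)).card = 3 := by
  rw [card_insert_of_notMem (by simp [hxy, hxz]),
    card_insert_of_notMem (by simp [hyz]), card_singleton]

lemma L_move (hc : RainbowF4Free n col)
    (hunique : ∀ T ∈ B, ∀ S : Finset (Fin n), S.card = 3 → S ≠ T → col S ≠ col T)
    {x y z w : Fin n} (hxy : x ≠ y) (hxz : x ≠ z) (hxw : x ≠ w) (hyz : y ≠ z)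
    (hyw : y ≠ w) (hzw : z ≠ w) (hblk : ({y,z,w} : Finset (Fin n)) ∈ B) :
    col {x,y,z} = col {x,y,w} := by
  have h := hc x y z w hxy hxz hxw hyz hyw hzw
  have h1 : col {x,y,z} ≠ col {y,z,w} := by
    apply hunique _ hblk _ (tri_card hxy hxz hyz)
    intro hh
    have hx : x ∈ ({y,z,w} : Finset (Fin n)) := by rw [← hh]; simp
    simp only [mem_insert, mem_singleton] at hx
    rcases hx with h'|h'|h' <;> [exact hxy h'; exact hxz h'; exact hxw h']
  have h2 : col {x,y,w} ≠ col {y,z,w} := by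
    apply hunique _ hblk _ (tri_card hxy hxw hyw)
    intro hh
    have hx : x ∈ ({y,z,w} : Finset (Fin n)) := by rw [← hh]; simp
    simp only [mem_insert, mem_singleton] at hx
    rcases hx with h'|h'|h' <;> [exact hxy h'; exact hxz h'; exact hxw h']
  by_contra hne
  exact h ⟨hne, h1, h2⟩

lemma L_move2 (hc : RainbowF4Free n col)
    (hunique : ∀ T ∈ B, ∀ S : Finset (Fin n), S.card = 3 → S ≠ T → col S ≠ col T)
    {x y z w : Fin n} (hxy : x ≠ y) (hxz : x ≠ z) (hxw : x ≠ w) (hyz : y ≠ z)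
    (hyw : y ≠ w) (hzw : z ≠ w) (hblk : ({x,z,w} : Finset (Fin n)) ∈ B) :
    col {x,y,z} = col {x,y,w} := by
  have e1 : ({x,y,z} : Finset (Fin n)) = {y,x,z} := by ext t; simp; tauto
  have e2 : ({x,y,w} : Finset (Fin n)) = {y,x,w} := by ext t; simp; tauto
  rw [e1, e2]
  exact L_move hc hunique hxy.symm hyz hyw hxz hxw hzw hblk

lemma third_elem {T : Finset (Fin n)} (hT3 : T.card = 3) {a b : Fin n}
    (ha : a ∈ T) (hb : b ∈ T) (hab : a ≠ b) :
    ∃ g, g ≠ a ∧ g ≠ b ∧ T = {a,b,g} := by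
  have hsub : ({a,b} : Finset (Fin n)) ⊆ T := by
    intro t ht; simp only [mem_insert, mem_singleton] at ht
    rcases ht with rfl|rfl <;> assumption
  have h1 : (T \ {a,b}).card = 1 := by
    rw [card_sdiff_of_subset hsub, hT3, card_pair hab]
  obtain ⟨g, hg⟩ := card_eq_one.mp h1
  have hgm : g ∈ T \ ({a,b} : Finset (Fin n)) := by rw [hg]; exact mem_singleton_self g
  rw [mem_sdiff, mem_insert, mem_singleton] at hgm
  obtain ⟨hgT, hgne⟩ := hgm
  push_neg at hgne
  refine ⟨g, hgne.1, hgne.2, ?_⟩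
  apply (eq_of_subset_of_card_le ?_ ?_).symm
  · intro t ht; simp only [mem_insert, mem_singleton] at ht
    rcases ht with rfl|rfl|rfl <;> assumption
  · rw [hT3, tri_card hab (Ne.symm hgne.1) (Ne.symm hgne.2)]

lemma exists_third (hB : ∀ T ∈ B, T ⊆ W ∧ T.card = 3)
    (hpair : ∀ x ∈ W, ∀ y ∈ W, x ≠ y → ∃! T, T ∈ B ∧ x ∈ T ∧ y ∈ T)
    {x y : Fin n} (hx : x ∈ W) (hy : y ∈ W) (hxy : x ≠ y) :
    ∃ w, w ∈ W ∧ w ≠ x ∧ w ≠ y ∧ ({x,y,w} : Finset (Fin n)) ∈ B ∧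
      ∀ T ∈ B, x ∈ T → y ∈ T → T = {x,y,w} := by
  obtain ⟨T, ⟨hTB, hxT, hyT⟩, huniqT⟩ := hpair x hx y hy hxy
  obtain ⟨hTW, hT3⟩ := hB T hTB
  obtain ⟨w, hwx, hwy, hTeq⟩ := third_elem hT3 hxT hyT hxy
  have hwT : w ∈ T := by rw [hTeq]; simp
  refine ⟨w, hTW hwT, hwx, hwy, hTeq ▸ hTB, fun T' h1 h2 h3 => ?_⟩
  rw [← hTeq]; exact huniqT T' ⟨h1, h2, h3⟩

lemma block_unique
    (hpair : ∀ x ∈ W, ∀ y ∈ W, x ≠ y → ∃! T, T ∈ B ∧ x ∈ T ∧ y ∈ T)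
    {a b : Fin n} (ha : a ∈ W) (hb : b ∈ W) (hab : a ≠ b)
    {T1 T2 : Finset (Fin n)} (h1 : T1 ∈ B) (h2 : T2 ∈ B)
    (ha1 : a ∈ T1) (hb1 : b ∈ T1) (ha2 : a ∈ T2) (hb2 : b ∈ T2) : T1 = T2 := by
  obtain ⟨T, _, hu⟩ := hpair a ha b hb hab
  rw [hu T1 ⟨h1, ha1, hb1⟩, hu T2 ⟨h2, ha2, hb2⟩]

lemma one_extract {T : Finset (Fin n)} (hT3 : T.card = 3) {a : Fin n} (ha : a ∈ T) :
    ∃ p q, p ≠ q ∧ p ≠ a ∧ q ≠ a ∧ T = {a,p,q} := by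
  have h1 : (T \ {a}).card = 2 := by
    rw [card_sdiff_of_subset (singleton_subset_iff.mpr ha), hT3, card_singleton]
  obtain ⟨p, q, hpq, hpqeq⟩ := card_eq_two.mp h1
  have hp : p ∈ T \ {a} := by rw [hpqeq]; simp
  have hq : q ∈ T \ {a} := by rw [hpqeq]; simp
  rw [mem_sdiff, mem_singleton] at hp hq
  refine ⟨p, q, hpq, hp.2, hq.2, ?_⟩
  apply (eq_of_subset_of_card_le ?_ ?_).symm
  · intro t ht; simp only [mem_insert, mem_singleton] at ht
    rcases ht with rfl|rfl|rfl <;> [exact ha; exact hp.1; exact hq.1]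
  · rw [hT3]
    rw [card_insert_of_notMem (by simp [Ne.symm hp.2, Ne.symm hq.2]),
      card_insert_of_notMem (by simp [hpq]), card_singleton]

lemma eq2 (hc : RainbowF4Free n col) (hW : W.card = 7)
    (hB : ∀ T ∈ B, T ⊆ W ∧ T.card = 3)
    (hpair : ∀ x ∈ W, ∀ y ∈ W, x ≠ y → ∃! T, T ∈ B ∧ x ∈ T ∧ y ∈ T)
    (hunique : ∀ T ∈ B, ∀ S : Finset (Fin n), S.card = 3 → S ≠ T → col S ≠ col T)
    {x y z z' : Fin n} (hxW : x ∈ W) (hyW : y ∈ W) (hzW : z ∈ W) (hz'W : z' ∈ W)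
    (hxy : x ≠ y) (hxz : x ≠ z) (hxz' : x ≠ z') (hyz : y ≠ z) (hyz' : y ≠ z')
    (hzz' : z ≠ z')
    (hnb : ({x,y,z} : Finset (Fin n)) ∉ B) (hnb' : ({x,y,z'} : Finset (Fin n)) ∉ B) :
    col {x,y,z} = col {x,y,z'} := by
  obtain ⟨u, huW, hux, huy, hublk, huuniq⟩ := exists_third hB hpair hxW hyW hxy
  have hzu : z ≠ u := by
    intro h; apply hnb
    have : ({x,y,z} : Finset (Fin n)) = {x,y,u} := by rw [h]
    rw [this]; exact hublk
  have hz'u : z' ≠ u := by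
    intro h; apply hnb'
    have : ({x,y,z'} : Finset (Fin n)) = {x,y,u} := by rw [h]
    rw [this]; exact hublk
  obtain ⟨v, hvW, hvx, hvz, hvblk, hvuniq⟩ := exists_third hB hpair hxW hzW hxz
  have hvy : v ≠ y := by
    intro h; apply hnb
    have : ({x,y,z} : Finset (Fin n)) = {x,z,v} := by subst h; ext t; simp; tauto
    rw [this]; exact hvblk
  have hvu : v ≠ u := by
    intro h; subst h
    have := block_unique hpair hxW hvW hvx.symm hvblk hublk (by simp) (by simp)
      (by simp) (by simp)
    have hy' : y ∈ ({x,z,v} : Finset (Fin n)) := by rw [this]; simp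
    simp only [mem_insert, mem_singleton] at hy'
    rcases hy' with h'|h'|h' <;> [exact hxy h'.symm; exact hyz h'; exact hvy h'.symm]
  obtain ⟨w, hwW, hwy, hwz, hwblk, hwuniq⟩ := exists_third hB hpair hyW hzW hyz
  have hwx : w ≠ x := by
    intro h; apply hnb
    have : ({x,y,z} : Finset (Fin n)) = {y,z,w} := by subst h; ext t; simp; tauto
    rw [this]; exact hwblk
  have hwu : w ≠ u := by
    intro h; subst h
    have := block_unique hpair hyW hwW hwy.symm hwblk hublk (by simp) (by simp)
      (by simp) (by simp)
    have hx' : x ∈ ({y,z,w} : Finset (Fin n)) := by rw [this]; simp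
    simp only [mem_insert, mem_singleton] at hx'
    rcases hx' with h'|h'|h' <;> [exact hxy h'; exact hxz h'; exact hwx h'.symm]
  have hwv : w ≠ v := by
    intro h; subst h
    have := block_unique hpair hzW hwW hwz.symm hwblk hvblk (by simp) (by simp)
      (by simp) (by simp)
    have hx' : x ∈ ({y,z,w} : Finset (Fin n)) := by rw [this]; simp
    simp only [mem_insert, mem_singleton] at hx'
    rcases hx' with h'|h'|h' <;> [exact hxy h'; exact hxz h'; exact hwx h'.symm]
  by_cases h1 : z' = v
  · subst h1; exact L_move2 hc hunique hxy hxz hxz' hyz hyz' hzz' hvblk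
  by_cases h2 : z' = w
  · subst h2; exact L_move hc hunique hxy hxz hxz' hyz hyz' hzz' hwblk
  -- third case: z' is the remaining point
  have hxyw_nb : ({x,y,w} : Finset (Fin n)) ∉ B := by
    intro hmem
    have hcoleq : col {x,y,z} = col {x,y,w} :=
      L_move hc hunique hxy hxz hwx.symm hyz hwy.symm hwz.symm hwblk
    apply hunique _ hmem _ (tri_card hxy hxz hyz) _ hcoleq
    intro hh
    have hz2 : z ∈ ({x,y,w} : Finset (Fin n)) := by rw [← hh]; simp
    simp only [mem_insert, mem_singleton] at hz2
    rcases hz2 with h'|h'|h' <;> [exact hxz h'.symm; exact hyz h'.symm; exact hwz h'.symm]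
  obtain ⟨s, hsW, hsx, hsw, hsblk, hsuniq⟩ := exists_third hB hpair hxW hwW hwx.symm
  have hsy : s ≠ y := by
    intro h; apply hxyw_nb
    have : ({x,y,w} : Finset (Fin n)) = {x,w,s} := by subst h; ext t; simp; tauto
    rw [this]; exact hsblk
  have hsz : s ≠ z := by
    intro h
    have heq := block_unique hpair hzW hwW (fun hh => hwz hh.symm) hsblk hwblk
      (by rw [← h]; simp) (by simp) (by simp) (by simp)
    have hx' : x ∈ ({y,z,w} : Finset (Fin n)) := by rw [← heq]; simp
    simp only [mem_insert, mem_singleton] at hx'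
    rcases hx' with h'|h'|h' <;> [exact hxy h'; exact hxz h'; exact hwx h'.symm]
  have hsu : s ≠ u := by
    intro h; subst h
    have := block_unique hpair hxW hsW hsx.symm hsblk hublk (by simp) (by simp)
      (by simp) (by simp)
    have hw' : w ∈ ({x,y,s} : Finset (Fin n)) := by rw [← this]; simp
    simp only [mem_insert, mem_singleton] at hw'
    rcases hw' with h'|h'|h' <;> [exact hwx h'; exact hwy h'; exact hsw h'.symm]
  have hsv : s ≠ v := by
    intro h; subst h
    have := block_unique hpair hxW hsW hsx.symm hsblk hvblk (by simp) (by simp)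
      (by simp) (by simp)
    have hw' : w ∈ ({x,z,s} : Finset (Fin n)) := by rw [← this]; simp
    simp only [mem_insert, mem_singleton] at hw'
    rcases hw' with h'|h'|h' <;> [exact hwx h'; exact hwz h'; exact hsw h'.symm]
  -- cardinality argument: W = {x,y,u,z,v,w,s}
  have hcard7 : ({x,y,u,z,v,w,s} : Finset (Fin n)).card = 7 := by
    rw [card_insert_of_notMem (by simp [hxy, Ne.symm hux, hxz, Ne.symm hvx, Ne.symm hwx, Ne.symm hsx]),
      card_insert_of_notMem (by simp [Ne.symm huy, hyz, Ne.symm hvy, Ne.symm hwy, Ne.symm hsy]),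
      card_insert_of_notMem (by simp [Ne.symm hzu, Ne.symm hvu, Ne.symm hwu, Ne.symm hsu]),
      card_insert_of_notMem (by simp [Ne.symm hvz, Ne.symm hwz, Ne.symm hsz]),
      card_insert_of_notMem (by simp [Ne.symm hwv, Ne.symm hsv]),
      card_insert_of_notMem (by simp [Ne.symm hsw]), card_singleton]
  have hWeq : W = {x,y,u,z,v,w,s} := by
    apply (eq_of_subset_of_card_le ?_ ?_).symm
    · intro t ht; simp only [mem_insert, mem_singleton] at ht
      rcases ht with rfl|rfl|rfl|rfl|rfl|rfl|rfl <;> assumption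
    · rw [hW, hcard7]
  have hz's : z' = s := by
    have hz'm : z' ∈ ({x,y,u,z,v,w,s} : Finset (Fin n)) := by rw [← hWeq]; exact hz'W
    simp only [mem_insert, mem_singleton] at hz'm
    rcases hz'm with h'|h'|h'|h'|h'|h'|h' <;>
      first
      | exact absurd h'.symm hxz'
      | exact absurd h'.symm hyz'
      | exact absurd h' hz'u
      | exact absurd h'.symm hzz'
      | exact absurd h' h1
      | exact absurd h' h2
      | exact h'
  subst hz's
  calc col {x,y,z} = col {x,y,w} :=
        L_move hc hunique hxy hxz hwx.symm hyz hwy.symm hwz.symm hwblk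
    _ = col {x,y,z'} :=
        L_move2 hc hunique hxy hwx.symm hxz' hwy.symm hyz' hsw.symm hsblk

lemma eq1 (hc : RainbowF4Free n col) (hW : W.card = 7)
    (hB : ∀ T ∈ B, T ⊆ W ∧ T.card = 3)
    (hpair : ∀ x ∈ W, ∀ y ∈ W, x ≠ y → ∃! T, T ∈ B ∧ x ∈ T ∧ y ∈ T)
    (hunique : ∀ T ∈ B, ∀ S : Finset (Fin n), S.card = 3 → S ≠ T → col S ≠ col T)
    {x b c d e : Fin n} (hxW : x ∈ W) (hbW : b ∈ W) (hcW : c ∈ W) (hdW : d ∈ W)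
    (heW : e ∈ W)
    (hxb : x ≠ b) (hxc : x ≠ c) (hxd : x ≠ d) (hxe : x ≠ e)
    (hbc : b ≠ c) (hbd : b ≠ d) (hbe : b ≠ e) (hcd : c ≠ d) (hce : c ≠ e) (hde : d ≠ e)
    (hnb1 : ({x,b,c} : Finset (Fin n)) ∉ B) (hnb2 : ({x,d,e} : Finset (Fin n)) ∉ B) :
    col {x,b,c} = col {x,d,e} := by
  by_cases hbd' : ({x,b,d} : Finset (Fin n)) ∈ B
  · have hbe' : ({x,b,e} : Finset (Fin n)) ∉ B := by
      intro hmem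
      have heq := block_unique hpair hxW hbW hxb hbd' hmem (by simp) (by simp)
        (by simp) (by simp)
      have : d ∈ ({x,b,e} : Finset (Fin n)) := by rw [← heq]; simp
      simp only [mem_insert, mem_singleton] at this
      rcases this with h'|h'|h' <;> [exact hxd h'.symm; exact hbd h'.symm; exact hde h']
    have step1 : col {x,b,c} = col {x,b,e} :=
      eq2 hc hW hB hpair hunique hxW hbW hcW heW hxb hxc hxe hbc hbe hce hnb1 hbe'
    have p1 : ({x,b,e} : Finset (Fin n)) = {x,e,b} := by ext t; simp; tauto
    have p2 : ({x,d,e} : Finset (Fin n)) = {x,e,d} := by ext t; simp; tauto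
    have hnb2' : ({x,e,d} : Finset (Fin n)) ∉ B := by rw [← p2]; exact hnb2
    have hnb1' : ({x,e,b} : Finset (Fin n)) ∉ B := by rw [← p1]; exact hbe'
    have step2 : col {x,e,b} = col {x,e,d} :=
      eq2 hc hW hB hpair hunique hxW heW hbW hdW hxe hxb hxd (Ne.symm hbe)
        (Ne.symm hde) hbd hnb1' hnb2'
    rw [step1, p1, step2, ← p2]
  · have step1 : col {x,b,c} = col {x,b,d} :=
      eq2 hc hW hB hpair hunique hxW hbW hcW hdW hxb hxc hxd hbc hbd hcd hnb1 hbd'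
    have p1 : ({x,b,d} : Finset (Fin n)) = {x,d,b} := by ext t; simp; tauto
    have p2 : ({x,d,e} : Finset (Fin n)) = {x,d,e} := rfl
    have hnb1' : ({x,d,b} : Finset (Fin n)) ∉ B := by rw [← p1]; exact hbd'
    have step2 : col {x,d,b} = col {x,d,e} :=
      eq2 hc hW hB hpair hunique hxW hdW hbW heW hxd hxb hxe (Ne.symm hbd) hde hbe
        hnb1' hnb2
    rw [step1, p1, step2]

lemma eq0 (hc : RainbowF4Free n col) (hW : W.card = 7)
    (hB : ∀ T ∈ B, T ⊆ W ∧ T.card = 3)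
    (hpair : ∀ x ∈ W, ∀ y ∈ W, x ≠ y → ∃! T, T ∈ B ∧ x ∈ T ∧ y ∈ T)
    (hunique : ∀ T ∈ B, ∀ S : Finset (Fin n), S.card = 3 → S ≠ T → col S ≠ col T)
    {x y z d e f : Fin n} (hxW : x ∈ W) (hyW : y ∈ W) (hzW : z ∈ W) (hdW : d ∈ W)
    (heW : e ∈ W) (hfW : f ∈ W)
    (hxy : x ≠ y) (hxz : x ≠ z) (hyz : y ≠ z)
    (hde : d ≠ e) (hdf : d ≠ f) (hef : e ≠ f)
    (hxd : x ≠ d) (hxe : x ≠ e) (hxf : x ≠ f)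
    (hyd : y ≠ d) (hye : y ≠ e) (hyf : y ≠ f)
    (hzd : z ≠ d) (hze : z ≠ e) (hzf : z ≠ f)
    (hnb1 : ({x,y,z} : Finset (Fin n)) ∉ B) (hnb2 : ({d,e,f} : Finset (Fin n)) ∉ B) :
    col {x,y,z} = col {d,e,f} := by
  obtain ⟨p, hpW, hpe, hpf, hpblk, hpuniq⟩ := exists_third hB hpair heW hfW hef
  have pdef : ({d,e,f} : Finset (Fin n)) = {e,f,d} := by ext t; simp; tauto
  have hnb2' : ({e,f,d} : Finset (Fin n)) ∉ B := by rw [← pdef]; exact hnb2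
  by_cases hpx : p = x
  · -- use y as bridge point
    have hyef : ({y,e,f} : Finset (Fin n)) ∉ B := by
      intro hmem
      have := hpuniq _ hmem (by simp) (by simp)
      have hy' : y ∈ ({e,f,p} : Finset (Fin n)) := by rw [← this]; simp
      simp only [mem_insert, mem_singleton] at hy'
      rcases hy' with h'|h'|h' <;>
        [exact hye h'; exact hyf h'; exact hxy (hpx ▸ h').symm]
    have pxyz : ({x,y,z} : Finset (Fin n)) = {y,x,z} := by ext t; simp; tauto
    have hnb1' : ({y,x,z} : Finset (Fin n)) ∉ B := by rw [← pxyz]; exact hnb1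
    have step1 : col {y,x,z} = col {y,e,f} :=
      eq1 hc hW hB hpair hunique hyW hxW hzW heW hfW hxy.symm hyz hye hyf hxz hxe hxf
        hze hzf hef hnb1' hyef
    have pyef : ({y,e,f} : Finset (Fin n)) = {e,f,y} := by ext t; simp; tauto
    have hyef' : ({e,f,y} : Finset (Fin n)) ∉ B := by rw [← pyef]; exact hyef
    have step2 : col {e,f,y} = col {e,f,d} :=
      eq2 hc hW hB hpair hunique heW hfW hyW hdW hef hye.symm hde.symm hyf.symm
        hdf.symm hyd hyef' hnb2'
    rw [pxyz, step1, pyef, step2, ← pdef]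
  · have hxef : ({x,e,f} : Finset (Fin n)) ∉ B := by
      intro hmem
      have := hpuniq _ hmem (by simp) (by simp)
      have hx' : x ∈ ({e,f,p} : Finset (Fin n)) := by rw [← this]; simp
      simp only [mem_insert, mem_singleton] at hx'
      rcases hx' with h'|h'|h' <;> [exact hxe h'; exact hxf h'; exact hpx h'.symm]
    have step1 : col {x,y,z} = col {x,e,f} :=
      eq1 hc hW hB hpair hunique hxW hyW hzW heW hfW hxy hxz hxe hxf hyz hye hyf hze hzf
        hef hnb1 hxef
    have pxef : ({x,e,f} : Finset (Fin n)) = {e,f,x} := by ext t; simp; tauto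
    have hxef' : ({e,f,x} : Finset (Fin n)) ∉ B := by rw [← pxef]; exact hxef
    have step2 : col {e,f,x} = col {e,f,d} :=
      eq2 hc hW hB hpair hunique heW hfW hxW hdW hef hxe.symm hde.symm hxf.symm
        hdf.symm hxd hxef' hnb2'
    rw [step1, pxef, step2, ← pdef]

lemma eqAll (hc : RainbowF4Free n col) (hW : W.card = 7)
    (hB : ∀ T ∈ B, T ⊆ W ∧ T.card = 3)
    (hpair : ∀ x ∈ W, ∀ y ∈ W, x ≠ y → ∃! T, T ∈ B ∧ x ∈ T ∧ y ∈ T)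
    (hunique : ∀ T ∈ B, ∀ S : Finset (Fin n), S.card = 3 → S ≠ T → col S ≠ col T)
    {T T' : Finset (Fin n)} (hTW : T ⊆ W) (hT3 : T.card = 3) (hTnb : T ∉ B)
    (hT'W : T' ⊆ W) (hT'3 : T'.card = 3) (hT'nb : T' ∉ B) :
    col T = col T' := by
  obtain ⟨a, b, c, hab, hac, hbc, hTeq⟩ := card_eq_three.mp hT3
  subst hTeq
  have haW : a ∈ W := hTW (by simp)
  have hbW : b ∈ W := hTW (by simp)
  have hcW : c ∈ W := hTW (by simp)
  by_cases ha : a ∈ T' <;> by_cases hb : b ∈ T' <;> by_cases hcm : c ∈ T'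
  · -- all in : T = T'
    have : ({a,b,c} : Finset (Fin n)) = T' := by
      apply eq_of_subset_of_card_le
      · intro t ht; simp only [mem_insert, mem_singleton] at ht
        rcases ht with rfl|rfl|rfl <;> assumption
      · rw [hT'3]; exact le_of_eq hT3.symm
    rw [this]
  · -- a,b in, c not
    obtain ⟨g, hga, hgb, hT'eq⟩ := third_elem hT'3 ha hb hab
    have hgT' : g ∈ T' := by rw [hT'eq]; simp
    have hcg : c ≠ g := fun h => hcm (h ▸ hgT')
    rw [hT'eq]
    exact eq2 hc hW hB hpair hunique haW hbW hcW (hT'W hgT') hab hac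
      (Ne.symm hga) hbc (Ne.symm hgb) hcg hTnb (hT'eq ▸ hT'nb)
  · -- a,c in, b not
    obtain ⟨g, hga, hgc, hT'eq⟩ := third_elem hT'3 ha hcm hac
    have hgT' : g ∈ T' := by rw [hT'eq]; simp
    have hbg : b ≠ g := fun h => hb (h ▸ hgT')
    have p1 : ({a,b,c} : Finset (Fin n)) = {a,c,b} := by ext t; simp; tauto
    have hnb1 : ({a,c,b} : Finset (Fin n)) ∉ B := by rw [← p1]; exact hTnb
    rw [p1, hT'eq]
    exact eq2 hc hW hB hpair hunique haW hcW hbW (hT'W hgT') hac hab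
      (Ne.symm hga) (Ne.symm hbc) (Ne.symm hgc) hbg hnb1 (hT'eq ▸ hT'nb)
  · -- a in only
    obtain ⟨p, q, hpq, hpa, hqa, hT'eq⟩ := one_extract hT'3 ha
    have hpT' : p ∈ T' := by rw [hT'eq]; simp
    have hqT' : q ∈ T' := by rw [hT'eq]; simp
    have hbp : b ≠ p := fun h => hb (h ▸ hpT')
    have hbq : b ≠ q := fun h => hb (h ▸ hqT')
    have hcp : c ≠ p := fun h => hcm (h ▸ hpT')
    have hcq : c ≠ q := fun h => hcm (h ▸ hqT')
    rw [hT'eq]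
    exact eq1 hc hW hB hpair hunique haW hbW hcW (hT'W hpT') (hT'W hqT')
      hab hac (Ne.symm hpa) (Ne.symm hqa) hbc hbp hbq hcp hcq hpq hTnb
      (hT'eq ▸ hT'nb)
  · -- b,c in, a not
    obtain ⟨g, hgb, hgc, hT'eq⟩ := third_elem hT'3 hb hcm hbc
    have hgT' : g ∈ T' := by rw [hT'eq]; simp
    have hag : a ≠ g := fun h => ha (h ▸ hgT')
    have p1 : ({a,b,c} : Finset (Fin n)) = {b,c,a} := by ext t; simp; tauto
    have hnb1 : ({b,c,a} : Finset (Fin n)) ∉ B := by rw [← p1]; exact hTnb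
    rw [p1, hT'eq]
    exact eq2 hc hW hB hpair hunique hbW hcW haW (hT'W hgT') hbc (Ne.symm hab)
      (Ne.symm hgb) (Ne.symm hac) (Ne.symm hgc) hag hnb1 (hT'eq ▸ hT'nb)
  · -- b in only
    obtain ⟨p, q, hpq, hpb, hqb, hT'eq⟩ := one_extract hT'3 hb
    have hpT' : p ∈ T' := by rw [hT'eq]; simp
    have hqT' : q ∈ T' := by rw [hT'eq]; simp
    have hap : a ≠ p := fun h => ha (h ▸ hpT')
    have haq : a ≠ q := fun h => ha (h ▸ hqT')
    have hcp : c ≠ p := fun h => hcm (h ▸ hpT')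
    have hcq : c ≠ q := fun h => hcm (h ▸ hqT')
    have p1 : ({a,b,c} : Finset (Fin n)) = {b,a,c} := by ext t; simp; tauto
    have hnb1 : ({b,a,c} : Finset (Fin n)) ∉ B := by rw [← p1]; exact hTnb
    rw [p1, hT'eq]
    exact eq1 hc hW hB hpair hunique hbW haW hcW (hT'W hpT') (hT'W hqT')
      (Ne.symm hab) hbc (Ne.symm hpb) (Ne.symm hqb) hac hap haq hcp hcq hpq hnb1
      (hT'eq ▸ hT'nb)
  · -- c in only
    obtain ⟨p, q, hpq, hpc, hqc, hT'eq⟩ := one_extract hT'3 hcm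
    have hpT' : p ∈ T' := by rw [hT'eq]; simp
    have hqT' : q ∈ T' := by rw [hT'eq]; simp
    have hap : a ≠ p := fun h => ha (h ▸ hpT')
    have haq : a ≠ q := fun h => ha (h ▸ hqT')
    have hbp : b ≠ p := fun h => hb (h ▸ hpT')
    have hbq : b ≠ q := fun h => hb (h ▸ hqT')
    have p1 : ({a,b,c} : Finset (Fin n)) = {c,a,b} := by ext t; simp; tauto
    have hnb1 : ({c,a,b} : Finset (Fin n)) ∉ B := by rw [← p1]; exact hTnb
    rw [p1, hT'eq]
    exact eq1 hc hW hB hpair hunique hcW haW hbW (hT'W hpT') (hT'W hqT')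
      (Ne.symm hac) (Ne.symm hbc) (Ne.symm hpc) (Ne.symm hqc) hab hap haq hbp hbq
      hpq hnb1 (hT'eq ▸ hT'nb)
  · -- none in
    obtain ⟨d, e, f, hde, hdf, hef, hT'eq⟩ := card_eq_three.mp hT'3
    have hdT' : d ∈ T' := by rw [hT'eq]; simp
    have heT' : e ∈ T' := by rw [hT'eq]; simp
    have hfT' : f ∈ T' := by rw [hT'eq]; simp
    have had : a ≠ d := fun h => ha (h ▸ hdT')
    have hae : a ≠ e := fun h => ha (h ▸ heT')
    have haf : a ≠ f := fun h => ha (h ▸ hfT')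
    have hbd : b ≠ d := fun h => hb (h ▸ hdT')
    have hbe : b ≠ e := fun h => hb (h ▸ heT')
    have hbf : b ≠ f := fun h => hb (h ▸ hfT')
    have hcd : c ≠ d := fun h => hcm (h ▸ hdT')
    have hce : c ≠ e := fun h => hcm (h ▸ heT')
    have hcf : c ≠ f := fun h => hcm (h ▸ hfT')
    rw [hT'eq]
    exact eq0 hc hW hB hpair hunique haW hbW hcW (hT'W hdT') (hT'W heT') (hT'W hfT')
      hab hac hbc hde hdf hef had hae haf hbd hbe hbf hcd hce hcf hTnb
      (hT'eq ▸ hT'nb)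


end Aux

/-- Proposition: if a rainbow `F4`-free coloring of `K_n^(3)` contains a rainbow
Steiner triple system of order 7 on a 7-set `W`, each of whose block colors is
used on no other triple, then all non-block triples inside `W` receive one
common color. -/
theorem fano_complement_monochromatic (n : ℕ)
    (col : Finset (Fin n) → ℕ) (hc : RainbowF4Free n col)
    (W : Finset (Fin n)) (hW : W.card = 7)
    (B : Finset (Finset (Fin n)))
    (hB : ∀ T ∈ B, T ⊆ W ∧ T.card = 3)
    (hpair : ∀ x ∈ W, ∀ y ∈ W, x ≠ y → ∃! T, T ∈ B ∧ x ∈ T ∧ y ∈ T)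
    (hrainbow : ∀ T1 ∈ B, ∀ T2 ∈ B, col T1 = col T2 → T1 = T2)
    (hunique : ∀ T ∈ B, ∀ S : Finset (Fin n), S.card = 3 → S ≠ T → col S ≠ col T) :
    ∃ γ : ℕ, ∀ T : Finset (Fin n), T ⊆ W → T.card = 3 → T ∉ B → col T = γ := by
  by_cases h : ∃ T0 : Finset (Fin n), T0 ⊆ W ∧ T0.card = 3 ∧ T0 ∉ B
  · obtain ⟨T0, hT0W, hT03, hT0nb⟩ := h
    exact ⟨col T0, fun T hTW hT3 hTnb =>
      eqAll hc hW hB hpair hunique hTW hT3 hTnb hT0W hT03 hT0nb⟩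
  · exact ⟨0, fun T hTW hT3 hTnb => absurd ⟨T, hTW, hT3, hTnb⟩ h⟩
end
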